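/- arXiv:1602.06991 — 8 statements merged into one kernel-verified Lean document; each statement's English description precedes it below -/
import Mathlib

section
/- Let X₁, X₂, … be a countable family of metric spaces with chosen base points xᵢ ∈ Xᵢ. Define on the disjoint union Σᵢ Xᵢ the distance d(a,b) = 0 if a = b; d(a,b) = d_{Xᵢ}(a,b) + i if a,b ∈ Xᵢ and a ≠ b; and d(a,b) = d_{Xᵢ}(a,xᵢ) + i + j + d_{Xⱼ}(b,xⱼ) if a ∈ Xᵢ, b ∈ Xⱼ with i ≠ j. Then d is a metric and Σᵢ Xᵢ, together with the inclusion maps ιᵢ, is the coproduct of the Xᵢ in the category of metric spaces and bornologous maps: for every metric space Z and every family of bornologous maps fᵢ : Xᵢ → Z, there is a unique bornologous map f : Σᵢ Xᵢ → Z with f ∘ ιᵢ = fᵢ for all i. -/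
open Bornology

def Bornologous {X Y : Type*} [PseudoMetricSpace X] [PseudoMetricSpace Y] (f : X → Y) : Prop :=
  ∀ R : ℝ, 0 < R → ∃ S : ℝ, 0 < S ∧ ∀ x x' : X, dist x x' ≤ R → dist (f x) (f x') ≤ S

def ProperMap {X Y : Type*} [PseudoMetricSpace X] [PseudoMetricSpace Y] (f : X → Y) : Prop :=
  ∀ B : Set Y, IsBounded B → IsBounded (f ⁻¹' B)

def IsCoarse {X Y : Type*} [PseudoMetricSpace X] [PseudoMetricSpace Y] (f : X → Y) : Prop :=
  Bornologous f ∧ ProperMap f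

def Close {X Y : Type*} [PseudoMetricSpace Y] (f g : X → Y) : Prop :=
  ∃ R : ℝ, 0 < R ∧ ∀ x : X, dist (f x) (g x) ≤ R

def coprodDist {X Y : Type*} [MetricSpace X] [MetricSpace Y] (x₀ : X) (y₀ : Y) :
    X ⊕ Y → X ⊕ Y → ℝ
  | Sum.inl a, Sum.inl b => dist a b
  | Sum.inl a, Sum.inr b => dist a x₀ + 1 + dist y₀ b
  | Sum.inr a, Sum.inl b => dist b x₀ + 1 + dist y₀ a
  | Sum.inr a, Sum.inr b => dist a b

noncomputable def coprodMetric {X Y : Type*} [MetricSpace X] [MetricSpace Y]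
    (x₀ : X) (y₀ : Y) : MetricSpace (X ⊕ Y) where
  dist := coprodDist x₀ y₀
  dist_self := by rintro (a | a) <;> simp [coprodDist]
  dist_comm := fun p q => by
    match p, q with
    | Sum.inl a, Sum.inl b => exact dist_comm a b
    | Sum.inl a, Sum.inr b => rfl
    | Sum.inr a, Sum.inl b => rfl
    | Sum.inr a, Sum.inr b => exact dist_comm a b
  dist_triangle := fun p q r => by
    match p, q, r with
    | Sum.inl a, Sum.inl b, Sum.inl c => exact dist_triangle a b c
    | Sum.inl a, Sum.inl b, Sum.inr c =>
      show dist a x₀ + 1 + dist y₀ c ≤ dist a b + (dist b x₀ + 1 + dist y₀ c)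
      have := dist_triangle a b x₀; linarith
    | Sum.inl a, Sum.inr b, Sum.inl c =>
      show dist a c ≤ (dist a x₀ + 1 + dist y₀ b) + (dist c x₀ + 1 + dist y₀ b)
      have h1 := dist_triangle a x₀ c
      have h2 : dist x₀ c = dist c x₀ := dist_comm _ _
      have h3 := dist_nonneg (x := y₀) (y := b)
      linarith
    | Sum.inl a, Sum.inr b, Sum.inr c =>
      show dist a x₀ + 1 + dist y₀ c ≤ (dist a x₀ + 1 + dist y₀ b) + dist b c
      have := dist_triangle y₀ b c; linarith
    | Sum.inr a, Sum.inl b, Sum.inl c =>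
      show dist c x₀ + 1 + dist y₀ a ≤ (dist b x₀ + 1 + dist y₀ a) + dist b c
      have h1 := dist_triangle c b x₀
      have h2 : dist c b = dist b c := dist_comm _ _
      linarith
    | Sum.inr a, Sum.inl b, Sum.inr c =>
      show dist a c ≤ (dist b x₀ + 1 + dist y₀ a) + (dist b x₀ + 1 + dist y₀ c)
      have h1 := dist_triangle a y₀ c
      have h2 : dist a y₀ = dist y₀ a := dist_comm _ _
      have h3 := dist_nonneg (x := b) (y := x₀)
      linarith
    | Sum.inr a, Sum.inr b, Sum.inl c =>
      show dist c x₀ + 1 + dist y₀ a ≤ dist a b + (dist c x₀ + 1 + dist y₀ b)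
      have h1 := dist_triangle y₀ b a
      have h2 : dist b a = dist a b := dist_comm _ _
      linarith
    | Sum.inr a, Sum.inr b, Sum.inr c => exact dist_triangle a b c
  eq_of_dist_eq_zero := fun {p q} h => by
    match p, q, h with
    | Sum.inl a, Sum.inl b, h => exact congrArg Sum.inl (eq_of_dist_eq_zero h)
    | Sum.inl a, Sum.inr b, h =>
      exfalso
      have h1 := dist_nonneg (x := a) (y := x₀)
      have h2 := dist_nonneg (x := y₀) (y := b)
      have h' : dist a x₀ + 1 + dist y₀ b = 0 := h
      linarith
    | Sum.inr a, Sum.inl b, h =>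
      exfalso
      have h1 := dist_nonneg (x := b) (y := x₀)
      have h2 := dist_nonneg (x := y₀) (y := a)
      have h' : dist b x₀ + 1 + dist y₀ a = 0 := h
      linarith
    | Sum.inr a, Sum.inr b, h => exact congrArg Sum.inr (eq_of_dist_eq_zero h)

/-- Condition (C): every coarse map into a coarse coproduct factors, up to closeness,
through one of the coproduct injections. -/
def CondC (X : Type u) [MetricSpace X] : Prop :=
  ∀ (Y Z : Type u) [MetricSpace Y] [MetricSpace Z] (y₀ : Y) (z₀ : Z) (f : X → Y ⊕ Z),
    letI := coprodMetric y₀ z₀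
    IsCoarse f →
      (∃ g : X → Y, IsCoarse g ∧ Close (Sum.inl ∘ g) f) ∨
      (∃ h : X → Z, IsCoarse h ∧ Close (Sum.inr ∘ h) f)

open scoped Classical

noncomputable def sigD {X : ℕ → Type u} [∀ i, MetricSpace (X i)] (p : ∀ i, X i) :
    (Σ i, X i) → (Σ i, X i) → ℝ := fun a b =>
  if a = b then 0
  else if h : a.1 = b.1 then dist a.2 (cast (congrArg X h.symm) b.2) + ((a.1 : ℝ) + 1)
  else dist a.2 (p a.1) + ((a.1 : ℝ) + 1) + ((b.1 : ℝ) + 1) + dist b.2 (p b.1)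

lemma sigD_same {X : ℕ → Type u} [∀ i, MetricSpace (X i)] (p : ∀ i, X i)
    (i : ℕ) (a b : X i) :
    sigD p (⟨i, a⟩ : Σ i, X i) ⟨i, b⟩ = if a = b then 0 else dist a b + ((i : ℝ) + 1) := by
  by_cases h : a = b <;> simp [sigD, Sigma.ext_iff, h]

lemma sigD_diff {X : ℕ → Type u} [∀ i, MetricSpace (X i)] (p : ∀ i, X i)
    {i j : ℕ} (h : i ≠ j) (a : X i) (b : X j) :
    sigD p (⟨i, a⟩ : Σ i, X i) ⟨j, b⟩
      = dist a (p i) + ((i : ℝ) + 1) + ((j : ℝ) + 1) + dist b (p j) := by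
  have h1 : (⟨i, a⟩ : Σ i, X i) ≠ ⟨j, b⟩ := by
    intro hc; exact h (congrArg Sigma.fst hc)
  simp [sigD, h1, h]

lemma sigD_comm {X : ℕ → Type u} [∀ i, MetricSpace (X i)] (p : ∀ i, X i)
    (a b : Σ i, X i) : sigD p a b = sigD p b a := by
  obtain ⟨i, a⟩ := a; obtain ⟨j, b⟩ := b
  by_cases h : i = j
  · subst h; rw [sigD_same, sigD_same]
    by_cases hab : a = b
    · simp [hab]
    · simp [hab, Ne.symm hab, dist_comm]
  · rw [sigD_diff p h, sigD_diff p (Ne.symm h)]; ring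

lemma sigD_triangle {X : ℕ → Type u} [∀ i, MetricSpace (X i)] (p : ∀ i, X i)
    (a b c : Σ i, X i) : sigD p a c ≤ sigD p a b + sigD p b c := by
  obtain ⟨i, a⟩ := a; obtain ⟨j, b⟩ := b; obtain ⟨k, c⟩ := c
  have hi : (0:ℝ) ≤ i := Nat.cast_nonneg i
  have hj : (0:ℝ) ≤ j := Nat.cast_nonneg j
  have hk : (0:ℝ) ≤ k := Nat.cast_nonneg k
  by_cases hij : i = j <;> by_cases hjk : j = k
  · subst hij; subst hjk
    rw [sigD_same, sigD_same, sigD_same]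
    have t := dist_triangle a b c
    have n1 := dist_nonneg (x := a) (y := b)
    have n2 := dist_nonneg (x := b) (y := c)
    have n3 := dist_nonneg (x := a) (y := c)
    split_ifs with h1 h2 h3 <;>
      first
        | positivity
        | ((try subst h1); (try subst h2); (try subst h3);
           simp_all [dist_comm]; try linarith)
        | linarith
  · subst hij
    rw [sigD_same, sigD_diff p hjk, sigD_diff p hjk]
    have t := dist_triangle a b (p i)
    split_ifs with h1
    · subst h1; linarith
    · linarith
  · subst hjk
    rw [sigD_same, sigD_diff p hij, sigD_diff p hij]
    have t := dist_triangle c b (p j)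
    rw [dist_comm c b] at t
    split_ifs with h1
    · subst h1; linarith
    · linarith
  · by_cases hik : i = k
    · subst hik
      rw [sigD_same, sigD_diff p hij, sigD_diff p (Ne.symm hij) b c]
      have t := dist_triangle a (p i) c
      rw [dist_comm (p i) c] at t
      have hb := dist_nonneg (x := b) (y := p j)
      split_ifs with h1
      · have := dist_nonneg (x := a) (y := p i)
        have := dist_nonneg (x := c) (y := p i)
        linarith
      · linarith
    · rw [sigD_diff p hik, sigD_diff p hij, sigD_diff p hjk]
      have hb := dist_nonneg (x := b) (y := p j)
      linarith

lemma sigD_eq {X : ℕ → Type u} [∀ i, MetricSpace (X i)] (p : ∀ i, X i)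
    (a b : Σ i, X i) (h : sigD p a b = 0) : a = b := by
  obtain ⟨i, a⟩ := a; obtain ⟨j, b⟩ := b
  by_cases hij : i = j
  · subst hij
    rw [sigD_same] at h
    split_ifs at h with h1
    · rw [h1]
    · exfalso; have := dist_nonneg (x := a) (y := b); linarith
  · exfalso
    rw [sigD_diff p hij] at h
    have h1 := dist_nonneg (x := a) (y := p i)
    have h2 := dist_nonneg (x := b) (y := p j)
    linarith

noncomputable def sigMetric {X : ℕ → Type u} [∀ i, MetricSpace (X i)] (p : ∀ i, X i) :
    MetricSpace (Σ i, X i) where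
  dist := sigD p
  dist_self a := by simp [sigD]
  dist_comm := sigD_comm p
  dist_triangle := sigD_triangle p
  eq_of_dist_eq_zero := sigD_eq p _ _


/-- the countable coproduct of metric spaces `X₁, X₂, …` (here indexed by `ℕ`,
with `Xᵢ` of the paper corresponding to index `i - 1`): the indicated distance is a metric on
the disjoint union, and the resulting space with the inclusions is the coproduct in the
category of metric spaces and bornologous maps. -/
theorem countable_coproduct_of_metric_spaces {X : ℕ → Type u} [∀ i, MetricSpace (X i)]
    (p : ∀ i, X i) :
    ∃ m : MetricSpace (Σ i, X i),
      letI := m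
      (∀ a : Σ i, X i, dist a a = 0) ∧
      (∀ (i : ℕ) (a b : X i), a ≠ b →
        dist (⟨i, a⟩ : Σ i, X i) ⟨i, b⟩ = dist a b + ((i : ℝ) + 1)) ∧
      (∀ (i j : ℕ), i ≠ j → ∀ (a : X i) (b : X j),
        dist (⟨i, a⟩ : Σ i, X i) ⟨j, b⟩
          = dist a (p i) + ((i : ℝ) + 1) + ((j : ℝ) + 1) + dist b (p j)) ∧
      ∀ (Z : Type w) [MetricSpace Z] (f : ∀ i, X i → Z),
        (∀ i, Bornologous (f i)) →
        ∃! h : (Σ i, X i) → Z, Bornologous h ∧ ∀ (i : ℕ) (x : X i), h ⟨i, x⟩ = f i x := by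
  refine ⟨sigMetric p, ?_, ?_, ?_, ?_⟩
  · intro a; exact (sigMetric p).dist_self a
  · intro i a b hab
    show sigD p ⟨i, a⟩ ⟨i, b⟩ = _
    rw [sigD_same]; simp [hab]
  · intro i j hij a b
    show sigD p ⟨i, a⟩ ⟨j, b⟩ = _
    rw [sigD_diff p hij]
  · intro Z _ f hf
    refine ⟨fun s => f s.1 s.2, ⟨?_, fun i x => rfl⟩, ?_⟩
    · -- bornologous
      intro R hR
      set N : ℕ := ⌈R⌉₊ with hN
      have hRN : R ≤ (N : ℝ) := Nat.le_ceil R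
      set g : ℕ → ℝ := fun i => (hf i R hR).choose with hg
      have hgpos : ∀ i, 0 < g i := fun i => (hf i R hR).choose_spec.1
      have hgspec : ∀ i, ∀ x x' : X i, dist x x' ≤ R → dist (f i x) (f i x') ≤ g i :=
        fun i => (hf i R hR).choose_spec.2
      set C : ℝ := ∑ i ∈ Finset.range N, ∑ j ∈ Finset.range N,
        dist (f i (p i)) (f j (p j)) with hC
      have hCnn : 0 ≤ C := Finset.sum_nonneg fun i _ =>
        Finset.sum_nonneg fun j _ => dist_nonneg
      set G : ℝ := ∑ i ∈ Finset.range N, g i with hG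
      have hGnn : 0 ≤ G := Finset.sum_nonneg fun i _ => (hgpos i).le
      have hgle : ∀ i ∈ Finset.range N, g i ≤ G := fun i hi =>
        Finset.single_le_sum (fun j _ => (hgpos j).le) hi
      have hCle : ∀ i ∈ Finset.range N, ∀ j ∈ Finset.range N,
          dist (f i (p i)) (f j (p j)) ≤ C := by
        intro i hi j hj
        calc dist (f i (p i)) (f j (p j))
            ≤ ∑ l ∈ Finset.range N, dist (f i (p i)) (f l (p l)) :=
              Finset.single_le_sum (f := fun l => dist (f i (p i)) (f l (p l)))
                (fun k _ => dist_nonneg) hj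
          _ ≤ C := Finset.single_le_sum
              (f := fun i => ∑ j ∈ Finset.range N, dist (f i (p i)) (f j (p j)))
              (fun k _ => Finset.sum_nonneg fun l _ => dist_nonneg) hi
      refine ⟨1 + 2 * G + C, by positivity, ?_⟩
      rintro ⟨i, a⟩ ⟨j, b⟩ hd
      have hd' : sigD p ⟨i, a⟩ ⟨j, b⟩ ≤ R := hd
      have memN : ∀ k : ℕ, (k : ℝ) + 1 ≤ R → k ∈ Finset.range N := by
        intro k hk
        have : (k : ℝ) < N := by linarith
        exact Finset.mem_range.mpr (by exact_mod_cast this)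
      by_cases hij : i = j
      · subst hij
        rw [sigD_same] at hd'
        split_ifs at hd' with hab
        · subst hab; simp; positivity
        · have h1 : dist a b ≤ R := by
            have := dist_nonneg (x := a) (y := b)
            have hi1 : (0:ℝ) ≤ i := Nat.cast_nonneg i
            linarith
          have hiN : i ∈ Finset.range N := by
            apply memN; have := dist_nonneg (x := a) (y := b); linarith
          have := hgspec i a b h1
          have := hgle i hiN
          show dist (f i a) (f i b) ≤ _
          linarith
      · rw [sigD_diff p hij] at hd'
        have n1 := dist_nonneg (x := a) (y := p i)
        have n2 := dist_nonneg (x := b) (y := p j)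
        have hi1 : (0:ℝ) ≤ i := Nat.cast_nonneg i
        have hj1 : (0:ℝ) ≤ j := Nat.cast_nonneg j
        have hiN : i ∈ Finset.range N := memN i (by linarith)
        have hjN : j ∈ Finset.range N := memN j (by linarith)
        have ha : dist a (p i) ≤ R := by linarith
        have hb : dist b (p j) ≤ R := by linarith
        have t1 := hgspec i a (p i) ha
        have t2 := hgspec j (p j) b (by rwa [dist_comm])
        have t3 := hCle i hiN j hjN
        have tri : dist (f i a) (f j b) ≤
            dist (f i a) (f i (p i)) + dist (f i (p i)) (f j (p j))
              + dist (f j (p j)) (f j b) := dist_triangle4 _ _ _ _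
        have g1 := hgle i hiN
        have g2 := hgle j hjN
        have : g i + g j ≤ 2 * G := by
          have := add_le_add g1 g2
          linarith
        show dist (f i a) (f j b) ≤ _
        linarith
    · rintro h' ⟨hb, hcomm⟩
      funext s
      obtain ⟨i, x⟩ := s
      exact hcomm i x
end

section
/- A metric space X fails to satisfy condition (C) if and only if there exist two unbounded subsets A and B of X such that X = A ∪ B and for every R > 0 there is a bounded set C_R ⊆ X such that d(a,b) ≥ R for all a ∈ A \ C_R and b ∈ B \ C_R. -/
open Bornology

section CoprodHelpers

variable {Y : Type*} {Z : Type*} [MetricSpace Y] [MetricSpace Z] (y₀ : Y) (z₀ : Z)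

lemma coprod_isBounded_inl_image {s : Set Y} (hs : IsBounded s) :
    letI := coprodMetric y₀ z₀
    IsBounded (Sum.inl '' s : Set (Y ⊕ Z)) := by
  letI := coprodMetric y₀ z₀
  obtain ⟨C, hC⟩ := Metric.isBounded_iff.mp hs
  refine Metric.isBounded_iff.mpr ⟨C, ?_⟩
  rintro _ ⟨a, ha, rfl⟩ _ ⟨b, hb, rfl⟩
  exact hC ha hb

lemma coprod_isBounded_inr_image {s : Set Z} (hs : IsBounded s) :
    letI := coprodMetric y₀ z₀
    IsBounded (Sum.inr '' s : Set (Y ⊕ Z)) := by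
  letI := coprodMetric y₀ z₀
  obtain ⟨C, hC⟩ := Metric.isBounded_iff.mp hs
  refine Metric.isBounded_iff.mpr ⟨C, ?_⟩
  rintro _ ⟨a, ha, rfl⟩ _ ⟨b, hb, rfl⟩
  exact hC ha hb

end CoprodHelpers

/-- If there is no decomposition as in the statement, then condition (C) holds. -/
lemma condC_of_no_decomposition {X : Type u} [MetricSpace X]
    (hdec : ¬ (∃ A B : Set X, ¬ IsBounded A ∧ ¬ IsBounded B ∧ A ∪ B = Set.univ ∧
        ∀ R : ℝ, 0 < R → ∃ C : Set X, IsBounded C ∧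
          ∀ a ∈ A \ C, ∀ b ∈ B \ C, R ≤ dist a b)) : CondC X := by
  intro Y Z _ _ y₀ z₀ f
  letI := coprodMetric y₀ z₀
  intro hf
  obtain ⟨hb, hp⟩ := hf
  classical
  set A : Set X := f ⁻¹' (Set.range Sum.inl) with hAdef
  set B : Set X := f ⁻¹' (Set.range Sum.inr) with hBdef
  have hUnion : A ∪ B = Set.univ := by
    ext x
    simp only [Set.mem_union, Set.mem_preimage, Set.mem_range, Set.mem_univ, iff_true,
      hAdef, hBdef]
    cases hx : f x with
    | inl y => exact Or.inl ⟨y, rfl⟩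
    | inr z => exact Or.inr ⟨z, rfl⟩
  have hsep : ∀ R : ℝ, 0 < R → ∃ C : Set X, IsBounded C ∧
      ∀ a ∈ A \ C, ∀ b ∈ B \ C, R ≤ dist a b := by
    intro R hR
    obtain ⟨S, hS, hSd⟩ := hb R hR
    refine ⟨f ⁻¹' (Sum.inl '' Metric.closedBall y₀ S),
      hp _ (coprod_isBounded_inl_image y₀ z₀ Metric.isBounded_closedBall), ?_⟩
    rintro a ⟨⟨ya, hya⟩, haC⟩ b ⟨⟨zb, hzb⟩, hbC⟩
    by_contra hlt
    push_neg at hlt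
    have hdab := hSd a b hlt.le
    have hya' : S < dist ya y₀ := by
      by_contra hle
      push_neg at hle
      exact haC ⟨ya, Metric.mem_closedBall.mpr hle, hya⟩
    have heq : dist (f a) (f b) = dist ya y₀ + 1 + dist z₀ zb := by
      rw [← hya, ← hzb]; rfl
    have hz := dist_nonneg (x := z₀) (y := zb)
    rw [heq] at hdab
    linarith
  have hAB : IsBounded A ∨ IsBounded B := by
    by_contra hcon
    push_neg at hcon
    exact hdec ⟨A, B, hcon.1, hcon.2, hUnion, hsep⟩
  rcases hAB with hAb | hBb
  · -- A bounded : factor through Z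
    right
    refine ⟨fun x => Sum.elim (fun _ => z₀) id (f x), ⟨?_, ?_⟩, ?_⟩
    · -- bornologous
      intro R hR
      obtain ⟨S, hS, hSd⟩ := hb R hR
      refine ⟨S, hS, fun x x' hd => ?_⟩
      have h1 := hSd x x' hd
      cases hx : f x with
      | inl y =>
        cases hx' : f x' with
        | inl y' =>
          simp only [hx, hx', Sum.elim_inl]
          rw [dist_self]; exact hS.le
        | inr z' =>
          have heq : dist (f x) (f x') = dist y y₀ + 1 + dist z₀ z' := by rw [hx, hx']; rfl
          rw [heq] at h1
          have hy := dist_nonneg (x := y) (y := y₀)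
          simp only [hx, hx', Sum.elim_inl, Sum.elim_inr, id]
          linarith
      | inr z =>
        cases hx' : f x' with
        | inl y' =>
          have heq : dist (f x) (f x') = dist y' y₀ + 1 + dist z₀ z := by rw [hx, hx']; rfl
          rw [heq] at h1
          have hy := dist_nonneg (x := y') (y := y₀)
          simp only [hx, hx', Sum.elim_inl, Sum.elim_inr, id]
          rw [dist_comm]
          linarith
        | inr z' =>
          have heq : dist (f x) (f x') = dist z z' := by rw [hx, hx']; rfl
          rw [heq] at h1
          simp only [hx, hx', Sum.elim_inr, id]
          exact h1
    · -- proper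
      intro W hW
      have hsub : (fun x => Sum.elim (fun _ => z₀) id (f x)) ⁻¹' W
          ⊆ A ∪ f ⁻¹' (Sum.inr '' W) := by
        intro x hx
        cases hfx : f x with
        | inl y => exact Or.inl ⟨y, hfx.symm⟩
        | inr z =>
          right
          simp only [Set.mem_preimage, hfx]
          refine ⟨z, ?_, rfl⟩
          have hx' : Sum.elim (fun _ => z₀) id (f x) ∈ W := hx
          rw [hfx] at hx'
          exact hx'
      exact (hAb.union (hp _ (coprod_isBounded_inr_image y₀ z₀ hW))).subset hsub
    · -- close
      have hM : ∃ M : ℝ, ∀ x : X, ∀ y : Y, f x = Sum.inl y → dist y y₀ ≤ M := by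
        by_cases hAe : A.Nonempty
        · obtain ⟨a₀, ha₀⟩ := hAe
          obtain ⟨y₁, hy₁⟩ := ha₀
          obtain ⟨r, hr⟩ := Metric.isBounded_iff.mp hAb
          have hr0 : 0 ≤ r := le_trans (by rw [dist_self]) (hr (⟨y₁, hy₁⟩ : a₀ ∈ A) ⟨y₁, hy₁⟩)
          obtain ⟨S, hS, hSd⟩ := hb (r + 1) (by linarith)
          refine ⟨S + dist y₁ y₀, fun x y hxy => ?_⟩
          have hxA : x ∈ A := ⟨y, hxy.symm⟩
          have hd := hSd x a₀ (le_trans (hr hxA ⟨y₁, hy₁⟩) (by linarith))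
          have heq : dist (f x) (f a₀) = dist y y₁ := by rw [hxy, ← hy₁]; rfl
          rw [heq] at hd
          calc dist y y₀ ≤ dist y y₁ + dist y₁ y₀ := dist_triangle _ _ _
            _ ≤ S + dist y₁ y₀ := by linarith
        · refine ⟨0, fun x y hxy => absurd ⟨x, ⟨y, hxy.symm⟩⟩ hAe⟩
      obtain ⟨M, hM⟩ := hM
      refine ⟨max (M + 1) 1, lt_of_lt_of_le one_pos (le_max_right _ _), fun x => ?_⟩
      cases hfx : f x with
      | inl y =>
        have heq : dist ((Sum.inr ∘ fun x => Sum.elim (fun _ => z₀) id (f x)) x) (Sum.inl y : Y ⊕ Z)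
            = dist y y₀ + 1 + dist z₀ z₀ := by
          simp only [Function.comp_apply, hfx]; rfl
        rw [heq, dist_self]
        have := hM x y hfx
        calc dist y y₀ + 1 + 0 ≤ M + 1 := by linarith
          _ ≤ max (M + 1) 1 := le_max_left _ _
      | inr z =>
        have heq : dist ((Sum.inr ∘ fun x => Sum.elim (fun _ => z₀) id (f x)) x) (Sum.inr z : Y ⊕ Z)
            = dist z z := by
          simp only [Function.comp_apply, hfx]; rfl
        rw [heq, dist_self]
        exact le_trans zero_le_one (le_max_right _ _)
  · -- B bounded : factor through Y
    left
    refine ⟨fun x => Sum.elim id (fun _ => y₀) (f x), ⟨?_, ?_⟩, ?_⟩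
    · -- bornologous
      intro R hR
      obtain ⟨S, hS, hSd⟩ := hb R hR
      refine ⟨S, hS, fun x x' hd => ?_⟩
      have h1 := hSd x x' hd
      cases hx : f x with
      | inl y =>
        cases hx' : f x' with
        | inl y' =>
          have heq : dist (f x) (f x') = dist y y' := by rw [hx, hx']; rfl
          rw [heq] at h1
          simp only [hx, hx', Sum.elim_inl, id]
          exact h1
        | inr z' =>
          have heq : dist (f x) (f x') = dist y y₀ + 1 + dist z₀ z' := by rw [hx, hx']; rfl
          rw [heq] at h1
          have hz := dist_nonneg (x := z₀) (y := z')
          simp only [hx, hx', Sum.elim_inl, Sum.elim_inr, id]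
          linarith
      | inr z =>
        cases hx' : f x' with
        | inl y' =>
          have heq : dist (f x) (f x') = dist y' y₀ + 1 + dist z₀ z := by rw [hx, hx']; rfl
          rw [heq] at h1
          have hz := dist_nonneg (x := z₀) (y := z)
          simp only [hx, hx', Sum.elim_inl, Sum.elim_inr, id]
          rw [dist_comm]
          linarith
        | inr z' =>
          simp only [hx, hx', Sum.elim_inr]
          rw [dist_self]; exact hS.le
    · -- proper
      intro W hW
      have hsub : (fun x => Sum.elim id (fun _ => y₀) (f x)) ⁻¹' W
          ⊆ B ∪ f ⁻¹' (Sum.inl '' W) := by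
        intro x hx
        cases hfx : f x with
        | inr z => exact Or.inl ⟨z, hfx.symm⟩
        | inl y =>
          right
          simp only [Set.mem_preimage, hfx]
          refine ⟨y, ?_, rfl⟩
          have hx' : Sum.elim id (fun _ => y₀) (f x) ∈ W := hx
          rw [hfx] at hx'
          exact hx'
      exact (hBb.union (hp _ (coprod_isBounded_inl_image y₀ z₀ hW))).subset hsub
    · -- close
      have hM : ∃ M : ℝ, ∀ x : X, ∀ z : Z, f x = Sum.inr z → dist z₀ z ≤ M := by
        by_cases hBe : B.Nonempty
        · obtain ⟨b₀, hb₀⟩ := hBe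
          obtain ⟨z₁, hz₁⟩ := hb₀
          obtain ⟨r, hr⟩ := Metric.isBounded_iff.mp hBb
          have hr0 : 0 ≤ r := le_trans (by rw [dist_self]) (hr (⟨z₁, hz₁⟩ : b₀ ∈ B) ⟨z₁, hz₁⟩)
          obtain ⟨S, hS, hSd⟩ := hb (r + 1) (by linarith)
          refine ⟨S + dist z₀ z₁, fun x z hxz => ?_⟩
          have hxB : x ∈ B := ⟨z, hxz.symm⟩
          have hd := hSd x b₀ (le_trans (hr hxB ⟨z₁, hz₁⟩) (by linarith))
          have heq : dist (f x) (f b₀) = dist z z₁ := by rw [hxz, ← hz₁]; rfl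
          rw [heq] at hd
          calc dist z₀ z ≤ dist z₀ z₁ + dist z₁ z := dist_triangle _ _ _
            _ = dist z₀ z₁ + dist z z₁ := by rw [dist_comm z₁ z]
            _ ≤ S + dist z₀ z₁ := by linarith
        · refine ⟨0, fun x z hxz => absurd ⟨x, ⟨z, hxz.symm⟩⟩ hBe⟩
      obtain ⟨M, hM⟩ := hM
      refine ⟨max (M + 1) 1, lt_of_lt_of_le one_pos (le_max_right _ _), fun x => ?_⟩
      cases hfx : f x with
      | inr z =>
        have heq : dist ((Sum.inl ∘ fun x => Sum.elim id (fun _ => y₀) (f x)) x) (Sum.inr z : Y ⊕ Z)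
            = dist y₀ y₀ + 1 + dist z₀ z := by
          simp only [Function.comp_apply, hfx]; rfl
        rw [heq, dist_self]
        have := hM x z hfx
        calc 0 + 1 + dist z₀ z ≤ M + 1 := by linarith
          _ ≤ max (M + 1) 1 := le_max_left _ _
      | inl y =>
        have heq : dist ((Sum.inl ∘ fun x => Sum.elim id (fun _ => y₀) (f x)) x) (Sum.inl y : Y ⊕ Z)
            = dist y y := by
          simp only [Function.comp_apply, hfx]; rfl
        rw [heq, dist_self]
        exact le_trans zero_le_one (le_max_right _ _)

/-- a metric space fails condition (C) iff it decomposes into two unbounded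
subsets which, outside of suitable bounded sets, are arbitrarily far apart. -/
theorem not_condC_iff_decomposition {X : Type u} [MetricSpace X] :
    ¬ CondC X ↔
      (∃ A B : Set X, ¬ IsBounded A ∧ ¬ IsBounded B ∧ A ∪ B = Set.univ ∧
        ∀ R : ℝ, 0 < R → ∃ C : Set X, IsBounded C ∧
          ∀ a ∈ A \ C, ∀ b ∈ B \ C, R ≤ dist a b) := by
  constructor
  · intro hnc
    by_contra hdec
    exact hnc (condC_of_no_decomposition hdec)
  · rintro ⟨A, B, hA, hB, hUnion, hsep⟩ hC
    classical
    have hAne : A.Nonempty := by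
      rcases A.eq_empty_or_nonempty with h | h
      · exact absurd (h ▸ Bornology.isBounded_empty) hA
      · exact h
    have hBne : B.Nonempty := by
      rcases B.eq_empty_or_nonempty with h | h
      · exact absurd (h ▸ Bornology.isBounded_empty) hB
      · exact h
    obtain ⟨y₀, hy₀⟩ := hAne
    obtain ⟨z₀, hz₀⟩ := hBne
    letI := coprodMetric y₀ z₀
    set f : X → X ⊕ X := fun x => if x ∈ A then Sum.inl x else Sum.inr x with hfdef
    obtain ⟨C1, hC1b, hC1⟩ := hsep 1 one_pos
    have hABsub : A ∩ B ⊆ C1 := by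
      rintro x ⟨hxA, hxB⟩
      by_contra hxC
      have h1 := hC1 x ⟨hxA, hxC⟩ x ⟨hxB, hxC⟩
      rw [dist_self] at h1
      linarith
    have hmemB : ∀ x : X, x ∉ A → x ∈ B := by
      intro x hx
      have hx2 : x ∈ A ∪ B := hUnion ▸ Set.mem_univ x
      rcases hx2 with h | h
      · exact absurd h hx
      · exact h
    -- f is bornologous
    have hfb : Bornologous f := by
      intro R hR
      obtain ⟨C, hCb, hCsep⟩ := hsep (R + 1) (by linarith)
      obtain ⟨M, hMsub⟩ := (Metric.isBounded_iff_subset_closedBall y₀).mp hCb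
      set K := max M 0 with hK
      have hK0 : 0 ≤ K := le_max_right _ _
      have hdyz := dist_nonneg (x := y₀) (y := z₀)
      refine ⟨2 * K + R + 1 + dist y₀ z₀, by linarith, fun x x' hd => ?_⟩
      have hinC : ∀ c : X, c ∈ C → dist c y₀ ≤ K := fun c hc =>
        le_trans (Metric.mem_closedBall.mp (hMsub hc)) (le_max_left _ _)
      by_cases hx : x ∈ A <;> by_cases hx' : x' ∈ A
      · have heq : dist (f x) (f x') = dist x x' := by
          simp only [hfdef, if_pos hx, if_pos hx']; rfl
        rw [heq]; linarith
      · -- x ∈ A, x' ∈ B \ A : one of them is in C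
        have hx'B := hmemB x' hx'
        have heq : dist (f x) (f x') = dist x y₀ + 1 + dist z₀ x' := by
          simp only [hfdef, if_pos hx, if_neg hx']; rfl
        rw [heq]
        have hcase : x ∈ C ∨ x' ∈ C := by
          by_contra hcc
          push_neg at hcc
          have := hCsep x ⟨hx, hcc.1⟩ x' ⟨hx'B, hcc.2⟩
          linarith
        rcases hcase with hc | hc
        · have h1 : dist x y₀ ≤ K := hinC x hc
          have h2 : dist z₀ x' ≤ dist z₀ y₀ + dist y₀ x + dist x x' := by
            calc dist z₀ x' ≤ dist z₀ x + dist x x' := dist_triangle _ _ _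
              _ ≤ dist z₀ y₀ + dist y₀ x + dist x x' := by
                have := dist_triangle z₀ y₀ x; linarith
          have h3 : dist y₀ x = dist x y₀ := dist_comm _ _
          have h4 : dist z₀ y₀ = dist y₀ z₀ := dist_comm _ _
          linarith
        · have h1 : dist x' y₀ ≤ K := hinC x' hc
          have h2 : dist x y₀ ≤ dist x x' + dist x' y₀ := dist_triangle _ _ _
          have h3 : dist z₀ x' ≤ dist z₀ y₀ + dist y₀ x' := dist_triangle _ _ _
          have h4 : dist z₀ y₀ = dist y₀ z₀ := dist_comm _ _
          have h5 : dist y₀ x' = dist x' y₀ := dist_comm _ _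
          linarith
      · -- x ∈ B \ A, x' ∈ A
        have hxB := hmemB x hx
        have heq : dist (f x) (f x') = dist x' y₀ + 1 + dist z₀ x := by
          simp only [hfdef, if_neg hx, if_pos hx']; rfl
        rw [heq]
        have hdc : dist x' x ≤ R := by rw [dist_comm]; exact hd
        have hcase : x' ∈ C ∨ x ∈ C := by
          by_contra hcc
          push_neg at hcc
          have := hCsep x' ⟨hx', hcc.1⟩ x ⟨hxB, hcc.2⟩
          linarith
        rcases hcase with hc | hc
        · have h1 : dist x' y₀ ≤ K := hinC x' hc
          have h2 : dist z₀ x ≤ dist z₀ y₀ + dist y₀ x' + dist x' x := by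
            calc dist z₀ x ≤ dist z₀ x' + dist x' x := dist_triangle _ _ _
              _ ≤ dist z₀ y₀ + dist y₀ x' + dist x' x := by
                have := dist_triangle z₀ y₀ x'; linarith
          have h3 : dist y₀ x' = dist x' y₀ := dist_comm _ _
          have h4 : dist z₀ y₀ = dist y₀ z₀ := dist_comm _ _
          linarith
        · have h1 : dist x y₀ ≤ K := hinC x hc
          have h2 : dist x' y₀ ≤ dist x' x + dist x y₀ := dist_triangle _ _ _
          have h3 : dist z₀ x ≤ dist z₀ y₀ + dist y₀ x := dist_triangle _ _ _
          have h4 : dist z₀ y₀ = dist y₀ z₀ := dist_comm _ _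
          have h5 : dist y₀ x = dist x y₀ := dist_comm _ _
          linarith
      · have hxB := hmemB x hx
        have heq : dist (f x) (f x') = dist x x' := by
          simp only [hfdef, if_neg hx, if_neg hx']; rfl
        rw [heq]; linarith
    -- f is proper
    have hfp : ProperMap f := by
      intro W hW
      obtain ⟨MW, hMW⟩ := Metric.isBounded_iff.mp hW
      refine Metric.isBounded_iff.mpr ⟨MW + dist y₀ z₀, fun x hx x' hx' => ?_⟩
      have hfd := hMW hx hx'
      have hdyz := dist_nonneg (x := y₀) (y := z₀)
      by_cases hxA : x ∈ A <;> by_cases hx'A : x' ∈ A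
      · have heq : dist (f x) (f x') = dist x x' := by
          simp only [hfdef, if_pos hxA, if_pos hx'A]; rfl
        rw [heq] at hfd; linarith
      · have heq : dist (f x) (f x') = dist x y₀ + 1 + dist z₀ x' := by
          simp only [hfdef, if_pos hxA, if_neg hx'A]; rfl
        rw [heq] at hfd
        have h1 : dist x x' ≤ dist x y₀ + dist y₀ z₀ + dist z₀ x' := by
          have t1 := dist_triangle x z₀ x'
          have t2 := dist_triangle x y₀ z₀
          linarith
        linarith
      · have heq : dist (f x) (f x') = dist x' y₀ + 1 + dist z₀ x := by
          simp only [hfdef, if_neg hxA, if_pos hx'A]; rfl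
        rw [heq] at hfd
        have h1 : dist x x' ≤ dist z₀ x + dist y₀ z₀ + dist x' y₀ := by
          have t1 := dist_triangle x z₀ x'
          have t2 := dist_triangle z₀ y₀ x'
          have c1 : dist x z₀ = dist z₀ x := dist_comm _ _
          have c2 : dist z₀ y₀ = dist y₀ z₀ := dist_comm _ _
          have c3 : dist y₀ x' = dist x' y₀ := dist_comm _ _
          linarith
        linarith
      · have heq : dist (f x) (f x') = dist x x' := by
          simp only [hfdef, if_neg hxA, if_neg hx'A]; rfl
        rw [heq] at hfd; linarith
    rcases hC X X y₀ z₀ f ⟨hfb, hfp⟩ with ⟨g, _, Rc, hRc, hclose⟩ | ⟨h, _, Rc, hRc, hclose⟩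
    · -- B would be bounded
      apply hB
      have hsub : B ⊆ Metric.closedBall z₀ Rc ∪ C1 := by
        intro x hxB
        by_cases hxA : x ∈ A
        · exact Or.inr (hABsub ⟨hxA, hxB⟩)
        · left
          have hc := hclose x
          have heq : dist ((Sum.inl ∘ g) x) (f x) = dist (g x) y₀ + 1 + dist z₀ x := by
            simp only [Function.comp_apply, hfdef, if_neg hxA]; rfl
          rw [heq] at hc
          have hgy := dist_nonneg (x := g x) (y := y₀)
          have : dist x z₀ ≤ Rc := by rw [dist_comm]; linarith
          exact Metric.mem_closedBall.mpr this
      exact (Metric.isBounded_closedBall.union hC1b).subset hsub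
    · -- A would be bounded
      apply hA
      have hsub : A ⊆ Metric.closedBall y₀ Rc := by
        intro x hxA
        have hc := hclose x
        have heq : dist ((Sum.inr ∘ h) x) (f x) = dist x y₀ + 1 + dist z₀ (h x) := by
          simp only [Function.comp_apply, hfdef, if_pos hxA]; rfl
        rw [heq] at hc
        have hz := dist_nonneg (x := z₀) (y := h x)
        exact Metric.mem_closedBall.mpr (by linarith)
      exact Metric.isBounded_closedBall.subset hsub
end

section
/- For a metric space X, the following are equivalent: (i) there exist two unbounded subsets A and B of X such that X = A ∪ B and for every R > 0 there is a bounded set C_R ⊆ X with d(a,b) ≥ R for all a ∈ A \ C_R and b ∈ B \ C_R; (ii) there exist metric spaces Y and Z, neither of which is bounded, with chosen base points, and a bijective coarse equivalence from X to the coarse coproduct Y + Z. -/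
open Bornology

section Aux

lemma unbounded_exists {α : Type*} [PseudoMetricSpace α] {s : Set α}
    (h : ¬ Bornology.IsBounded s) (c : α) (r : ℝ) : ∃ x ∈ s, r < dist x c := by
  by_contra hc
  push_neg at hc
  exact h ((Metric.isBounded_closedBall (x := c) (r := r)).subset
    fun x hx => Metric.mem_closedBall.mpr (hc x hx))

end Aux

/-- the decomposition condition holds iff `X` is bijectively coarsely equivalent
to a coarse coproduct of two unbounded metric spaces. -/
theorem decomposition_iff_bijective_coarse_equiv_coproduct {X : Type u} [MetricSpace X] :
    (∃ A B : Set X, ¬ IsBounded A ∧ ¬ IsBounded B ∧ A ∪ B = Set.univ ∧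
        ∀ R : ℝ, 0 < R → ∃ C : Set X, IsBounded C ∧
          ∀ a ∈ A \ C, ∀ b ∈ B \ C, R ≤ dist a b) ↔
      ∃ (Y Z : Type u) (mY : MetricSpace Y) (mZ : MetricSpace Z),
        letI := mY
        letI := mZ
        ∃ (y₀ : Y) (z₀ : Z),
          ¬ IsBounded (Set.univ : Set Y) ∧ ¬ IsBounded (Set.univ : Set Z) ∧
          ∃ u : X → Y ⊕ Z,
            letI := coprodMetric y₀ z₀
            Function.Bijective u ∧ Bornologous u ∧
              ∃ v : Y ⊕ Z → X, Bornologous v ∧ Close (u ∘ v) id ∧ Close (v ∘ u) id := by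
  constructor
  · rintro ⟨A, B, hA, hB, hAB, hsep⟩
    classical
    -- A ∩ B is bounded
    obtain ⟨C₁, hC₁, hsep₁⟩ := hsep 1 one_pos
    have hABsub : A ∩ B ⊆ C₁ := by
      intro x hx
      by_contra hxc
      have := hsep₁ x ⟨hx.1, hxc⟩ x ⟨hx.2, hxc⟩
      simp at this
      linarith
    have hABbd : IsBounded (A ∩ B) := hC₁.subset hABsub
    set A' := A \ B with hA'def
    have hA' : ¬ IsBounded A' := by
      intro h
      apply hA
      have hsub : A ⊆ (A ∩ B) ∪ A' := by
        intro x hx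
        by_cases hb : x ∈ B
        · exact Or.inl ⟨hx, hb⟩
        · exact Or.inr ⟨hx, hb⟩
      exact (hABbd.union h).subset hsub
    have hA'ne : A'.Nonempty := by
      rcases A'.eq_empty_or_nonempty with h | h
      · exact absurd (by rw [h]; exact Bornology.isBounded_empty) hA'
      · exact h
    have hBne : B.Nonempty := by
      rcases B.eq_empty_or_nonempty with h | h
      · exact absurd (by rw [h]; exact Bornology.isBounded_empty) hB
      · exact h
    obtain ⟨a₀, ha₀⟩ := hA'ne
    obtain ⟨b₀, hb₀⟩ := hBne
    have hmem : ∀ x : X, x ∉ A' → x ∈ B := by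
      intro x hx
      have hx' : x ∈ A ∪ B := hAB ▸ Set.mem_univ x
      rcases hx' with h | h
      · by_cases hb : x ∈ B
        · exact hb
        · exact absurd ⟨h, hb⟩ hx
      · exact h
    let u : X → ↥A' ⊕ ↥B := fun x => if h : x ∈ A' then Sum.inl ⟨x, h⟩ else Sum.inr ⟨x, hmem x h⟩
    let v : ↥A' ⊕ ↥B → X := Sum.elim Subtype.val Subtype.val
    have hvu : ∀ x, v (u x) = x := by
      intro x
      by_cases h : x ∈ A' <;> simp [u, v, h]
    have huv : ∀ p, u (v p) = p := by
      rintro (⟨a, ha⟩ | ⟨b, hb⟩)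
      · simp [u, v, ha]
      · have hnb : b ∉ A' := fun h => h.2 hb
        simp [u, v, hnb]
    refine ⟨↥A', ↥B, inferInstance, inferInstance, ⟨a₀, ha₀⟩, ⟨b₀, hb₀⟩, ?_, ?_, u, ?_, ?_,
      v, ?_, ?_, ?_⟩
    · -- ↥A' unbounded
      intro h
      apply hA'
      rw [Metric.isBounded_iff] at h ⊢
      obtain ⟨K, hK⟩ := h
      refine ⟨K, fun x hx y hy => ?_⟩
      have := hK (Set.mem_univ (⟨x, hx⟩ : ↥A')) (Set.mem_univ (⟨y, hy⟩ : ↥A'))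
      rwa [Subtype.dist_eq] at this
    · -- ↥B unbounded
      intro h
      apply hB
      rw [Metric.isBounded_iff] at h ⊢
      obtain ⟨K, hK⟩ := h
      refine ⟨K, fun x hx y hy => ?_⟩
      have := hK (Set.mem_univ (⟨x, hx⟩ : ↥B)) (Set.mem_univ (⟨y, hy⟩ : ↥B))
      rwa [Subtype.dist_eq] at this
    · exact Function.bijective_iff_has_inverse.mpr ⟨v, hvu, huv⟩
    · -- Bornologous u
      intro R hR
      obtain ⟨C₀, hC₀, hsepR⟩ := hsep (R + 1) (by linarith)
      have hC : IsBounded (C₀ ∪ {a₀, b₀}) :=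
        hC₀.union (((Set.finite_singleton b₀).insert a₀).isBounded)
      obtain ⟨K, hK⟩ := Metric.isBounded_iff.mp hC
      have ha₀C : a₀ ∈ C₀ ∪ {a₀, b₀} := Or.inr (by simp)
      have hb₀C : b₀ ∈ C₀ ∪ {a₀, b₀} := Or.inr (by simp)
      have hK0 : 0 ≤ K := by
        have := hK ha₀C ha₀C
        simpa using this
      refine ⟨2 * K + R + 1, by linarith, ?_⟩
      intro x x' hxx'
      have key : ∀ y y' : X, y ∈ A' → y' ∉ A' → dist y y' ≤ R →
          dist y a₀ + 1 + dist b₀ y' ≤ 2 * K + R + 1 := by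
        intro y y' hy hy' hd
        have hyC : y ∈ C₀ ∪ {a₀, b₀} ∨ y' ∈ C₀ ∪ {a₀, b₀} := by
          by_contra hc
          push_neg at hc
          have := hsepR y ⟨hy.1, fun h => hc.1 (Or.inl h)⟩ y'
            ⟨hmem y' hy', fun h => hc.2 (Or.inl h)⟩
          linarith
        rcases hyC with h | h
        · have h1 : dist y a₀ ≤ K := hK h ha₀C
          have h2 : dist y b₀ ≤ K := hK h hb₀C
          have h3 := dist_triangle b₀ y y'
          have h4 : dist b₀ y = dist y b₀ := dist_comm _ _
          linarith
        · have h1 : dist b₀ y' ≤ K := by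
            have := hK hb₀C h; linarith [this]
          have h2 : dist y' a₀ ≤ K := hK h ha₀C
          have h3 := dist_triangle y y' a₀
          linarith
      by_cases h1 : x ∈ A' <;> by_cases h2 : x' ∈ A'
      · have hux : u x = Sum.inl ⟨x, h1⟩ := dif_pos h1
        have hux' : u x' = Sum.inl ⟨x', h2⟩ := dif_pos h2
        rw [hux, hux']
        show dist x x' ≤ 2 * K + R + 1
        linarith
      · have hux : u x = Sum.inl ⟨x, h1⟩ := dif_pos h1
        have hux' : u x' = Sum.inr ⟨x', hmem x' h2⟩ := dif_neg h2
        rw [hux, hux']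
        show dist x a₀ + 1 + dist b₀ x' ≤ 2 * K + R + 1
        exact key x x' h1 h2 hxx'
      · have hux : u x = Sum.inr ⟨x, hmem x h1⟩ := dif_neg h1
        have hux' : u x' = Sum.inl ⟨x', h2⟩ := dif_pos h2
        rw [hux, hux']
        show dist x' a₀ + 1 + dist b₀ x ≤ 2 * K + R + 1
        exact key x' x h2 h1 (by rw [dist_comm]; exact hxx')
      · have hux : u x = Sum.inr ⟨x, hmem x h1⟩ := dif_neg h1
        have hux' : u x' = Sum.inr ⟨x', hmem x' h2⟩ := dif_neg h2
        rw [hux, hux']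
        show dist x x' ≤ 2 * K + R + 1
        linarith
    · -- Bornologous v
      intro R hR
      have hd0 : (0:ℝ) ≤ dist a₀ b₀ := dist_nonneg
      refine ⟨R + dist a₀ b₀ + 1, by linarith, ?_⟩
      rintro (⟨a, ha⟩ | ⟨a, ha⟩) (⟨b, hb⟩ | ⟨b, hb⟩) hd
      · have hd' : dist a b ≤ R := hd
        show dist a b ≤ R + dist a₀ b₀ + 1
        linarith
      · have hd' : dist a a₀ + 1 + dist b₀ b ≤ R := hd
        show dist a b ≤ R + dist a₀ b₀ + 1
        have t1 := dist_triangle a a₀ b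
        have t2 := dist_triangle a₀ b₀ b
        linarith
      · have hd' : dist b a₀ + 1 + dist b₀ a ≤ R := hd
        show dist a b ≤ R + dist a₀ b₀ + 1
        have t1 := dist_triangle a b₀ b
        have t2 := dist_triangle b₀ a₀ b
        have c1 : dist a b₀ = dist b₀ a := dist_comm _ _
        have c2 : dist a₀ b = dist b a₀ := dist_comm _ _
        have c3 : dist b₀ a₀ = dist a₀ b₀ := dist_comm _ _
        linarith
      · have hd' : dist a b ≤ R := hd
        show dist a b ≤ R + dist a₀ b₀ + 1
        linarith
    · letI : MetricSpace (↥A' ⊕ ↥B) := coprodMetric ⟨a₀, ha₀⟩ ⟨b₀, hb₀⟩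
      exact ⟨1, one_pos, fun p => by
        rw [Function.comp_apply, huv p, id_eq, dist_self]; exact zero_le_one⟩
    · exact ⟨1, one_pos, fun x => by
        rw [Function.comp_apply, hvu x, id_eq, dist_self]; exact zero_le_one⟩
  · rintro ⟨Y, Z, mY, mZ, y₀, z₀, hY, hZ, u, hu, hub, v, hvb, ⟨R₁, hR₁, huv⟩, ⟨R₂, hR₂, hvu⟩⟩
    classical
    set A : Set X := {x | ∃ a, u x = Sum.inl a} with hAdef
    set B : Set X := {x | ∃ b, u x = Sum.inr b} with hBdef
    have hunion : A ∪ B = Set.univ := by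
      rw [Set.eq_univ_iff_forall]
      intro x
      rcases h : u x with a | b
      · exact Or.inl ⟨a, h⟩
      · exact Or.inr ⟨b, h⟩
    -- key lemmas about where v sends far points
    have keyY : ∀ y : Y, R₁ < dist y y₀ →
        ∃ y' : Y, u (v (Sum.inl y)) = Sum.inl y' ∧ dist y' y ≤ R₁ := by
      intro y hy
      have h := huv (Sum.inl y)
      simp only [Function.comp_apply, id_eq] at h
      rcases h' : u (v (Sum.inl y)) with y' | z'
      · rw [h'] at h
        exact ⟨y', rfl, h⟩
      · exfalso
        rw [h'] at h
        have h'' : dist y y₀ + 1 + dist z₀ z' ≤ R₁ := h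
        have := dist_nonneg (x := z₀) (y := z')
        linarith
    have keyZ : ∀ z : Z, R₁ < dist z z₀ →
        ∃ z' : Z, u (v (Sum.inr z)) = Sum.inr z' ∧ dist z' z ≤ R₁ := by
      intro z hz
      have h := huv (Sum.inr z)
      simp only [Function.comp_apply, id_eq] at h
      rcases h' : u (v (Sum.inr z)) with y' | z'
      · exfalso
        rw [h'] at h
        have h'' : dist y' y₀ + 1 + dist z₀ z ≤ R₁ := h
        have h1 := dist_nonneg (x := y') (y := y₀)
        have h2 : dist z₀ z = dist z z₀ := dist_comm _ _
        linarith
      · rw [h'] at h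
        exact ⟨z', rfl, h⟩
    refine ⟨A, B, ?_, ?_, hunion, ?_⟩
    · -- A unbounded
      intro hbA
      apply hY
      obtain ⟨y₁, -, hy₁⟩ := unbounded_exists hY y₀ R₁
      obtain ⟨y₁', hy₁', hdy₁'⟩ := keyY y₁ hy₁
      obtain ⟨K₀, hK₀⟩ := Metric.isBounded_iff.mp hbA
      obtain ⟨S, hS, hSb⟩ := hub (max K₀ 1) (lt_of_lt_of_le one_pos (le_max_right _ _))
      apply (Metric.isBounded_closedBall (x := y₀)
        (r := max R₁ (R₁ + S + R₁ + dist y₁ y₀))).subset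
      intro y _
      rw [Metric.mem_closedBall]
      by_cases hy : dist y y₀ ≤ R₁
      · exact le_max_of_le_left hy
      · push_neg at hy
        obtain ⟨y', hy', hdy'⟩ := keyY y hy
        have hxA : v (Sum.inl y) ∈ A := ⟨y', hy'⟩
        have hx1A : v (Sum.inl y₁) ∈ A := ⟨y₁', hy₁'⟩
        have hd := hK₀ hxA hx1A
        have hd2 := hSb _ _ (le_trans hd (le_max_left _ _))
        rw [hy', hy₁'] at hd2
        have hd3 : dist y' y₁' ≤ S := hd2
        have t1 := dist_triangle y y' y₁'
        have t2 := dist_triangle y y₁' y₁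
        have t3 := dist_triangle y y₁ y₀
        have c1 : dist y y' = dist y' y := dist_comm _ _
        have c2 : dist y₁' y₁ = dist y₁' y₁ := rfl
        have c3 : dist y₁' y₁ ≤ R₁ := by
          have := dist_comm y₁' y₁; linarith [hdy₁']
        refine le_max_of_le_right ?_
        linarith
    · -- B unbounded
      intro hbB
      apply hZ
      obtain ⟨z₁, -, hz₁⟩ := unbounded_exists hZ z₀ R₁
      obtain ⟨z₁', hz₁', hdz₁'⟩ := keyZ z₁ hz₁
      obtain ⟨K₀, hK₀⟩ := Metric.isBounded_iff.mp hbB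
      obtain ⟨S, hS, hSb⟩ := hub (max K₀ 1) (lt_of_lt_of_le one_pos (le_max_right _ _))
      apply (Metric.isBounded_closedBall (x := z₀)
        (r := max R₁ (R₁ + S + R₁ + dist z₁ z₀))).subset
      intro z _
      rw [Metric.mem_closedBall]
      by_cases hz : dist z z₀ ≤ R₁
      · exact le_max_of_le_left hz
      · push_neg at hz
        obtain ⟨z', hz', hdz'⟩ := keyZ z hz
        have hxB : v (Sum.inr z) ∈ B := ⟨z', hz'⟩
        have hx1B : v (Sum.inr z₁) ∈ B := ⟨z₁', hz₁'⟩
        have hd := hK₀ hxB hx1B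
        have hd2 := hSb _ _ (le_trans hd (le_max_left _ _))
        rw [hz', hz₁'] at hd2
        have hd3 : dist z' z₁' ≤ S := hd2
        have t1 := dist_triangle z z' z₁'
        have t2 := dist_triangle z z₁' z₁
        have t3 := dist_triangle z z₁ z₀
        have c3 : dist z₁' z₁ ≤ R₁ := hdz₁'
        have c1 : dist z z' = dist z' z := dist_comm _ _
        refine le_max_of_le_right ?_
        linarith
    · -- separation
      intro R hR
      obtain ⟨S, hS, hSb⟩ := hub R hR
      obtain ⟨S', hS', hS'b⟩ := hvb (S + 1) (by linarith)
      letI : MetricSpace (Y ⊕ Z) := coprodMetric y₀ z₀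
      refine ⟨{x | dist (u x) (Sum.inl y₀) ≤ S + 1}, ?_, ?_⟩
      · apply (Metric.isBounded_closedBall (x := v (Sum.inl y₀)) (r := R₂ + S')).subset
        intro x hx
        rw [Metric.mem_closedBall]
        have h1 := hvu x
        simp only [Function.comp_apply, id_eq] at h1
        have h2 := hS'b (u x) (Sum.inl y₀) hx
        have t := dist_triangle x (v (u x)) (v (Sum.inl y₀))
        have c := dist_comm x (v (u x))
        linarith
      · rintro a ⟨haA, haC⟩ b ⟨hbB, hbC⟩
        by_contra hlt
        push_neg at hlt
        have hd := hSb a b (le_of_lt hlt)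
        obtain ⟨ya, hya⟩ := haA
        obtain ⟨zb, hzb⟩ := hbB
        rw [hya, hzb] at hd
        have h3 : dist ya y₀ + 1 + dist z₀ zb ≤ S := hd
        apply haC
        show dist (u a) (Sum.inl y₀) ≤ S + 1
        rw [hya]
        show dist ya y₀ ≤ S + 1
        have := dist_nonneg (x := z₀) (y := zb)
        linarith
end

section
/- The metric space ℕ of natural numbers, with the metric induced from ℝ, satisfies condition (C). Consequently, there is no surjective coarse map from ℕ to ℤ (with ℤ carrying the metric induced from ℝ). -/
open Bornology

open Metric

lemma natBddAbove {s : Set ℕ} (hs : IsBounded s) : ∃ N : ℕ, ∀ n ∈ s, n ≤ N := by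
  obtain ⟨r, hr⟩ := hs.subset_closedBall (0 : ℕ)
  refine ⟨⌊r⌋₊, fun n hn => ?_⟩
  have h := hr hn
  rw [Metric.mem_closedBall, Nat.dist_eq] at h
  have h' : (n : ℝ) ≤ r := by
    rwa [Nat.cast_zero, sub_zero, abs_of_nonneg (by positivity)] at h
  exact Nat.le_floor h'

section CoarseAux

variable {Y Z : Type*} [MetricSpace Y] [MetricSpace Z]

lemma coprodDist_swap (y₀ : Y) (z₀ : Z) (p q : Y ⊕ Z) :
    coprodDist z₀ y₀ p.swap q.swap = coprodDist y₀ z₀ p q := by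
  rcases p with a | a <;> rcases q with b | b <;>
    simp [coprodDist, Sum.swap, dist_comm] <;> ring

lemma coarse_of_eventually_inl (y₀ : Y) (z₀ : Z) (f : ℕ → Y ⊕ Z)
    (hf : letI := coprodMetric y₀ z₀; IsCoarse f) (N : ℕ)
    (hN : ∀ n, N ≤ n → ∃ a, f n = Sum.inl a) :
    letI := coprodMetric y₀ z₀
    ∃ g : ℕ → Y, IsCoarse g ∧ Close (Sum.inl ∘ g) f := by
  letI := coprodMetric y₀ z₀
  classical
  set g : ℕ → Y := fun n => Sum.elim id (fun _ => y₀) (f n) with hgdef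
  have hgl : ∀ n a, f n = Sum.inl a → g n = a := by
    intro n a h; simp [hgdef, h]
  obtain ⟨C, hC0, hC⟩ : ∃ C : ℝ, 0 < C ∧ ∀ n, dist (Sum.inl (g n) : Y ⊕ Z) (f n) ≤ C := by
    obtain ⟨D, hD⟩ : ∃ D : ℝ, ∀ n ∈ Finset.range (N + 1),
        dist (Sum.inl (g n) : Y ⊕ Z) (f n) ≤ D :=
      ⟨(Finset.range (N + 1)).sup' (by simp) (fun n => dist (Sum.inl (g n) : Y ⊕ Z) (f n)),
        fun n hn => Finset.le_sup' (fun n => dist (Sum.inl (g n) : Y ⊕ Z) (f n)) hn⟩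
    have hD0 : (0 : ℝ) ≤ D := le_trans dist_nonneg (hD 0 (by simp))
    refine ⟨D + 1, by linarith, fun n => ?_⟩
    rcases le_or_gt n N with h | h
    · exact le_trans (hD n (by simp [Nat.lt_succ_iff, h])) (by linarith)
    · obtain ⟨a, ha⟩ := hN n h.le
      rw [hgl n a ha, ha, dist_self]
      linarith
  refine ⟨g, ⟨?_, ?_⟩, C, hC0, fun n => hC n⟩
  · intro R hR
    obtain ⟨S, hS0, hS⟩ := hf.1 R hR
    refine ⟨C + S + C, by linarith, fun x x' hxx => ?_⟩
    have h1 := hC x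
    have h2 := hC x'
    have h3 := hS x x' hxx
    have h4 : dist (g x) (g x') = dist (Sum.inl (g x) : Y ⊕ Z) (Sum.inl (g x')) := rfl
    have h5 := dist_triangle4 (Sum.inl (g x) : Y ⊕ Z) (f x) (f x') (Sum.inl (g x'))
    have h6 : dist (f x') (Sum.inl (g x') : Y ⊕ Z)
        = dist (Sum.inl (g x') : Y ⊕ Z) (f x') := dist_comm _ _
    rw [h4]; linarith
  · intro B hB
    obtain ⟨r, hr⟩ := hB.subset_closedBall y₀
    refine (hf.2 (closedBall (Sum.inl y₀ : Y ⊕ Z) (r + C)) isBounded_closedBall).subset ?_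
    intro n hn
    have h1 : dist (g n) y₀ ≤ r := hr hn
    have h2 : dist (Sum.inl (g n) : Y ⊕ Z) (Sum.inl y₀) = dist (g n) y₀ := rfl
    have h3 := hC n
    have h4 := dist_triangle (f n) (Sum.inl (g n) : Y ⊕ Z) (Sum.inl y₀)
    have h5 : dist (f n) (Sum.inl (g n) : Y ⊕ Z)
        = dist (Sum.inl (g n) : Y ⊕ Z) (f n) := dist_comm _ _
    simp only [Set.mem_preimage, Metric.mem_closedBall]
    linarith

end CoarseAux

lemma nat_condC : CondC ℕ := by
  intro Y Z _ _ y₀ z₀ f hf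
  letI := coprodMetric y₀ z₀
  obtain ⟨S, hS0, hS⟩ := hf.1 1 one_pos
  obtain ⟨N, hN⟩ := natBddAbove
    (hf.2 (closedBall (Sum.inl y₀ : Y ⊕ Z) (S + 1)) isBounded_closedBall)
  have hstep : ∀ n, N < n → (f n).isLeft = (f (n + 1)).isLeft := by
    intro n hn
    have hd : dist n (n + 1) ≤ 1 := by
      rw [Nat.dist_eq]; push_cast; rw [abs_sub_comm]; simp
    have hfd := hS n (n + 1) hd
    rcases hl : f n with a | b <;> rcases hl' : f (n + 1) with a' | b'
    · rfl
    · exfalso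
      rw [hl, hl'] at hfd
      have hfd' : dist a y₀ + 1 + dist z₀ b' ≤ S := hfd
      have h0 := dist_nonneg (x := z₀) (y := b')
      have hmem : n ∈ f ⁻¹' closedBall (Sum.inl y₀ : Y ⊕ Z) (S + 1) := by
        simp only [Set.mem_preimage, Metric.mem_closedBall, hl]
        show dist a y₀ ≤ S + 1
        linarith
      exact absurd (hN n hmem) (by omega)
    · exfalso
      rw [hl, hl'] at hfd
      have hfd' : dist a' y₀ + 1 + dist z₀ b ≤ S := hfd
      have h0 := dist_nonneg (x := a') (y := y₀)
      have hmem : n ∈ f ⁻¹' closedBall (Sum.inl y₀ : Y ⊕ Z) (S + 1) := by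
        simp only [Set.mem_preimage, Metric.mem_closedBall, hl]
        show dist y₀ y₀ + 1 + dist z₀ b ≤ S + 1
        rw [dist_self]
        linarith
      exact absurd (hN n hmem) (by omega)
    · rfl
  have hconst : ∀ d, (f (N + 1 + d)).isLeft = (f (N + 1)).isLeft := by
    intro d
    induction d with
    | zero => rfl
    | succ d ih =>
      rw [show N + 1 + (d + 1) = (N + 1 + d) + 1 from rfl,
        ← hstep (N + 1 + d) (by omega), ih]
  cases hfl : (f (N + 1)).isLeft
  · -- eventually on the right
    letI := coprodMetric z₀ y₀
    have hev : ∀ n, N + 1 ≤ n → ∃ b, f n = Sum.inr b := by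
      intro n hn
      have hil : (f n).isLeft = false := by
        obtain ⟨d, rfl⟩ : ∃ d, n = N + 1 + d := ⟨n - (N + 1), by omega⟩
        rw [hconst d, hfl]
      rcases h : f n with a | b
      · rw [h] at hil; simp at hil
      · exact ⟨b, rfl⟩
    have hf' : letI := coprodMetric z₀ y₀; IsCoarse (Sum.swap ∘ f) := by
      letI := coprodMetric z₀ y₀
      constructor
      · intro R hR
        obtain ⟨S', hS'0, hS'⟩ := hf.1 R hR
        refine ⟨S', hS'0, fun x x' h => ?_⟩
        have key : dist ((Sum.swap ∘ f) x) ((Sum.swap ∘ f) x') = dist (f x) (f x') :=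
          coprodDist_swap y₀ z₀ (f x) (f x')
        rw [key]; exact hS' x x' h
      · intro B hB
        obtain ⟨r, hr⟩ := hB.subset_closedBall (Sum.inl z₀ : Z ⊕ Y)
        refine (hf.2 (closedBall (Sum.inr z₀ : Y ⊕ Z) r) isBounded_closedBall).subset ?_
        intro n hn
        have h1 : dist ((Sum.swap ∘ f) n) (Sum.inl z₀ : Z ⊕ Y) ≤ r := hr hn
        have h2 : dist ((Sum.swap ∘ f) n) (Sum.inl z₀ : Z ⊕ Y)
            = dist (f n) (Sum.inr z₀ : Y ⊕ Z) :=
          coprodDist_swap y₀ z₀ (f n) (Sum.inr z₀)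
        rw [h2] at h1
        exact h1
    obtain ⟨g, hg, R, hR0, hRc⟩ := coarse_of_eventually_inl z₀ y₀ (Sum.swap ∘ f) hf' (N + 1)
      (fun n hn => by
        obtain ⟨b, hb⟩ := hev n hn
        exact ⟨b, by simp [Function.comp, hb]⟩)
    right
    refine ⟨g, hg, R, hR0, fun n => ?_⟩
    have key : dist ((Sum.inr ∘ g) n) (f n)
        = dist ((Sum.inl ∘ g) n) ((Sum.swap ∘ f) n) :=
      (coprodDist_swap y₀ z₀ (Sum.inr (g n)) (f n)).symm
    rw [key]; exact hRc n
  · -- eventually on the left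
    have hev : ∀ n, N + 1 ≤ n → ∃ a, f n = Sum.inl a := by
      intro n hn
      have hil : (f n).isLeft = true := by
        obtain ⟨d, rfl⟩ : ∃ d, n = N + 1 + d := ⟨n - (N + 1), by omega⟩
        rw [hconst d, hfl]
      rcases h : f n with a | b
      · exact ⟨a, rfl⟩
      · rw [h] at hil; simp at hil
    left
    exact coarse_of_eventually_inl y₀ z₀ f hf (N + 1) hev

def phi : ℤ → ℕ ⊕ ℕ := fun k => if 0 ≤ k then Sum.inl k.toNat else Sum.inr (-k).toNat

lemma no_surjective_coarse (f : ℕ → ℤ) (hf : IsCoarse f)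
    (hs : Function.Surjective f) : False := by
  letI := coprodMetric (0 : ℕ) (0 : ℕ)
  have hcast : ∀ k : ℤ, 0 ≤ k → ((k.toNat : ℕ) : ℝ) = (k : ℝ) := by
    intro k hk; exact_mod_cast Int.toNat_of_nonneg hk
  have hφdist : ∀ a b : ℤ, dist (phi a) (phi b) ≤ dist a b + 1 := by
    intro a b
    rcases le_or_gt 0 a with ha | ha <;> rcases le_or_gt 0 b with hb | hb
    · have h : phi a = Sum.inl a.toNat := if_pos ha
      have h' : phi b = Sum.inl b.toNat := if_pos hb
      rw [h, h']
      show dist a.toNat b.toNat ≤ dist a b + 1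
      rw [Nat.dist_eq, Int.dist_eq, hcast a ha, hcast b hb]
      linarith
    · have h : phi a = Sum.inl a.toNat := if_pos ha
      have h' : phi b = Sum.inr (-b).toNat := if_neg (not_le.2 hb)
      rw [h, h']
      show dist a.toNat 0 + 1 + dist 0 (-b).toNat ≤ dist a b + 1
      rw [Nat.dist_eq, Nat.dist_eq, Int.dist_eq, hcast a ha, hcast (-b) (by omega)]
      have ha' : (0 : ℝ) ≤ (a : ℝ) := by exact_mod_cast ha
      have hb' : (b : ℝ) < 0 := by exact_mod_cast hb
      push_cast
      rw [sub_zero, zero_sub, abs_neg, abs_of_nonneg ha',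
        abs_of_nonneg (by linarith : (0 : ℝ) ≤ -(b : ℝ)),
        abs_of_nonneg (by linarith : (0 : ℝ) ≤ (a : ℝ) - b)]
      linarith
    · have h : phi a = Sum.inr (-a).toNat := if_neg (not_le.2 ha)
      have h' : phi b = Sum.inl b.toNat := if_pos hb
      rw [h, h']
      show dist b.toNat 0 + 1 + dist 0 (-a).toNat ≤ dist a b + 1
      rw [Nat.dist_eq, Nat.dist_eq, Int.dist_eq, hcast b hb, hcast (-a) (by omega)]
      have ha' : (a : ℝ) < 0 := by exact_mod_cast ha
      have hb' : (0 : ℝ) ≤ (b : ℝ) := by exact_mod_cast hb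
      push_cast
      rw [sub_zero, zero_sub, abs_neg, abs_of_nonneg hb',
        abs_of_nonneg (by linarith : (0 : ℝ) ≤ -(a : ℝ)),
        abs_of_nonpos (by linarith : (a : ℝ) - b ≤ 0)]
      linarith
    · have h : phi a = Sum.inr (-a).toNat := if_neg (not_le.2 ha)
      have h' : phi b = Sum.inr (-b).toNat := if_neg (not_le.2 hb)
      rw [h, h']
      show dist (-a).toNat (-b).toNat ≤ dist a b + 1
      rw [Nat.dist_eq, Int.dist_eq, hcast (-a) (by omega), hcast (-b) (by omega)]
      push_cast
      rw [show -(a : ℝ) - -(b : ℝ) = -((a : ℝ) - b) by ring, abs_neg]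
      linarith
  have hcoarse : IsCoarse (phi ∘ f) := by
    constructor
    · intro R hR
      obtain ⟨S, hS0, hS⟩ := hf.1 R hR
      exact ⟨S + 1, by linarith, fun x x' h =>
        le_trans (hφdist (f x) (f x')) (by linarith [hS x x' h])⟩
    · intro B hB
      obtain ⟨r, hr⟩ := hB.subset_closedBall (Sum.inl (0 : ℕ) : ℕ ⊕ ℕ)
      refine (hf.2 (closedBall (0 : ℤ) (r + 1)) isBounded_closedBall).subset ?_
      intro n hn
      have h1 : dist (phi (f n)) (Sum.inl (0 : ℕ) : ℕ ⊕ ℕ) ≤ r := hr hn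
      simp only [Set.mem_preimage, Metric.mem_closedBall]
      rw [Int.dist_eq]
      push_cast
      rw [sub_zero]
      rcases le_or_gt 0 (f n) with hk | hk
      · have h : phi (f n) = Sum.inl (f n).toNat := if_pos hk
        rw [h] at h1
        have h2 : dist (f n).toNat (0 : ℕ) ≤ r := h1
        rw [Nat.dist_eq, hcast (f n) hk] at h2
        have : (0 : ℝ) ≤ ((f n : ℤ) : ℝ) := by exact_mod_cast hk
        rw [abs_of_nonneg this]
        rw [Nat.cast_zero, sub_zero, abs_of_nonneg this] at h2
        linarith
      · have h : phi (f n) = Sum.inr (-(f n)).toNat := if_neg (not_le.2 hk)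
        rw [h] at h1
        have h2 : dist (0 : ℕ) 0 + 1 + dist (0 : ℕ) (-(f n)).toNat ≤ r := h1
        rw [dist_self, Nat.dist_eq, hcast (-(f n)) (by omega)] at h2
        have hneg : ((f n : ℤ) : ℝ) < 0 := by exact_mod_cast hk
        rw [abs_of_nonpos hneg.le]
        have hcst : ((-f n : ℤ) : ℝ) = -((f n : ℤ) : ℝ) := by push_cast; ring
        rw [Nat.cast_zero, zero_sub, abs_neg, hcst,
          abs_of_nonneg (by linarith : (0 : ℝ) ≤ -((f n : ℤ) : ℝ))] at h2
        linarith
  rcases nat_condC ℕ ℕ 0 0 (phi ∘ f) hcoarse with ⟨g, _, R, hR0, hRc⟩ | ⟨g, _, R, hR0, hRc⟩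
  · set m : ℕ := ⌈R⌉₊ + 1 with hm
    obtain ⟨n, hn⟩ := hs (-(m : ℤ))
    have h1 := hRc n
    have h2 : phi (f n) = Sum.inr m := by
      rw [hn]
      have : ¬ (0 : ℤ) ≤ -(m : ℤ) := by simp [hm]; omega
      rw [phi, if_neg this]
      congr 1
    simp only [Function.comp_apply, h2] at h1
    have h3 : dist (g n) (0 : ℕ) + 1 + dist (0 : ℕ) m ≤ R := h1
    have h4 : (m : ℝ) ≤ dist (0 : ℕ) m := by
      rw [Nat.dist_eq, Nat.cast_zero, zero_sub, abs_neg, abs_of_nonneg (by positivity)]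
    have h5 : R < (m : ℝ) := by
      have := Nat.le_ceil R
      have : R ≤ (⌈R⌉₊ : ℝ) := this
      have hmr : ((⌈R⌉₊ : ℕ) : ℝ) + 1 = (m : ℝ) := by push_cast [hm]; ring
      linarith
    have h6 := dist_nonneg (x := g n) (y := (0 : ℕ))
    linarith
  · set m : ℕ := ⌈R⌉₊ + 1 with hm
    obtain ⟨n, hn⟩ := hs (m : ℤ)
    have h1 := hRc n
    have h2 : phi (f n) = Sum.inl m := by
      rw [hn, phi, if_pos (by positivity)]
      congr 1
    simp only [Function.comp_apply, h2] at h1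
    have h3 : dist m (0 : ℕ) + 1 + dist (0 : ℕ) (g n) ≤ R := h1
    have h4 : (m : ℝ) ≤ dist m (0 : ℕ) := by
      rw [Nat.dist_eq, Nat.cast_zero, sub_zero, abs_of_nonneg (by positivity)]
    have h5 : R < (m : ℝ) := by
      have : R ≤ (⌈R⌉₊ : ℝ) := Nat.le_ceil R
      have hmr : ((⌈R⌉₊ : ℕ) : ℝ) + 1 = (m : ℝ) := by push_cast [hm]; ring
      linarith
    have h6 := dist_nonneg (x := (0 : ℕ)) (y := g n)
    linarith

/-- `ℕ` satisfies condition (C); consequently there is no surjective coarse map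
from `ℕ` to `ℤ`. -/
theorem nat_condC_and_no_surjective_coarse_map_to_int :
    CondC ℕ ∧ ∀ f : ℕ → ℤ, IsCoarse f → ¬ Function.Surjective f := by
  exact ⟨nat_condC, fun f hf hs => no_surjective_coarse f hf hs⟩
end

section
/- If f : X → Y is a surjective coarse map between metric spaces and X satisfies condition (C), then Y satisfies condition (C). -/
open Bornology

/-!
Let `G : Y → W ⊕ Z` be coarse. A coarse map into `W ⊕ Z` is close to a map into one summand
exactly when its image meets the other summand in a bounded set, and `G ∘ f` has the same image
as `G`, so it suffices to bound one side of the image of the coarse map `F = G ∘ f`. Condition (C)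
for `X` only speaks about coproducts of spaces in the universe of `X`, so `W` and `Z` are replaced
by two copies of `X` metrized by pulling back the metric of `W ⊕ Z` along `F`: the map sending `x`
to its copy on the side where `F x` lies is coarse, and `F` factors through it by a 1-Lipschitz map.
-/

open Set

section Coarse

variable {X Y Z : Type*} [PseudoMetricSpace X] [PseudoMetricSpace Y] [PseudoMetricSpace Z]

theorem IsCoarse.comp {f : X → Y} {g : Y → Z} (hf : IsCoarse f) (hg : IsCoarse g) :
    IsCoarse (g ∘ f) := by
  refine ⟨fun R hR => ?_, fun B hB => hf.2 _ (hg.2 B hB)⟩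
  obtain ⟨S, hS, hfS⟩ := hf.1 R hR
  obtain ⟨T, hT, hgT⟩ := hg.1 S hS
  exact ⟨T, hT, fun x x' h => hgT _ _ (hfS x x' h)⟩

theorem IsCoarse.of_close {f g : X → Y} (hfg : Close f g) (hg : IsCoarse g) : IsCoarse f := by
  obtain ⟨C, hC, hfgC⟩ := hfg
  refine ⟨fun R hR => ?_, fun B hB => ?_⟩
  · obtain ⟨S, hS, hgS⟩ := hg.1 R hR
    refine ⟨C + S + C, by positivity, fun x x' h => ?_⟩
    calc dist (f x) (f x') ≤ dist (f x) (g x) + dist (g x) (g x') + dist (g x') (f x') :=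
          dist_triangle4 _ _ _ _
      _ ≤ C + S + C := by
          gcongr
          exacts [hfgC x, hgS x x' h, dist_comm (f x') _ ▸ hfgC x']
  · refine (hg.2 _ (hB.cthickening (δ := C))).subset fun x hx => ?_
    exact Metric.mem_cthickening_of_dist_le _ _ _ _ hx (dist_comm (f x) _ ▸ hfgC x)

theorem ProperMap.of_comp_of_lipschitzWith {f : X → Y} {g : Y → Z} {K : NNReal}
    (hgf : ProperMap (g ∘ f)) (hg : LipschitzWith K g) : ProperMap f := fun _ hB =>
  (hgf _ (hg.isBounded_image hB)).subset fun _ hx => mem_image_of_mem g hx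

theorem Isometry.isCoarse_of_comp {e : Y → Z} (he : Isometry e) {g : X → Y}
    (hg : IsCoarse (e ∘ g)) : IsCoarse g := by
  refine ⟨fun R hR => ?_, hg.2.of_comp_of_lipschitzWith he.lipschitz⟩
  obtain ⟨S, hS, hgS⟩ := hg.1 R hR
  exact ⟨S, hS, fun x x' h => he.dist_eq (g x) (g x') ▸ hgS x x' h⟩

theorem Isometry.exists_isCoarse_close_of_isBounded_range_diff [Nonempty Y] {e : Y → Z}
    (he : Isometry e) {G : X → Z} (hG : IsCoarse G) (hbdd : IsBounded (range G \ range e)) :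
    ∃ g : X → Y, IsCoarse g ∧ Close (e ∘ g) G := by
  set c := e (Classical.choice ‹Nonempty Y›)
  obtain ⟨r, hr, hsub⟩ := hbdd.subset_closedBall_lt 0 c
  have hclose : Close (e ∘ Function.invFun e ∘ G) G := by
    refine ⟨r, hr, fun x => ?_⟩
    by_cases hx : ∃ y, e y = G x
    · simp [Function.invFun_eq hx, hr.le]
    · simp only [Function.comp_apply, Function.invFun_neg hx]
      exact dist_comm (G x) c ▸ hsub ⟨mem_range_self x, hx⟩
  exact ⟨_, he.isCoarse_of_comp (IsCoarse.of_close hclose hG), hclose⟩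

end Coarse

section Coproduct

variable {W Z : Type*} [MetricSpace W] [MetricSpace Z] (w₀ : W) (z₀ : Z)

theorem isometry_inl_coprod :
    letI := coprodMetric w₀ z₀
    Isometry (Sum.inl : W → W ⊕ Z) :=
  letI := coprodMetric w₀ z₀
  Isometry.of_dist_eq fun _ _ => rfl

theorem isometry_inr_coprod :
    letI := coprodMetric w₀ z₀
    Isometry (Sum.inr : Z → W ⊕ Z) :=
  letI := coprodMetric w₀ z₀
  Isometry.of_dist_eq fun _ _ => rfl

theorem coprod_dist_inl_inr_eq_dist_base_add (w : W) (z : Z) :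
    letI := coprodMetric w₀ z₀
    dist (Sum.inl w : W ⊕ Z) (Sum.inr z) = dist w w₀ + dist (Sum.inl w₀ : W ⊕ Z) (Sum.inr z) := by
  show dist w w₀ + 1 + dist z₀ z = dist w w₀ + (dist w₀ w₀ + 1 + dist z₀ z)
  rw [dist_self]
  ring

theorem coprod_dist_inl_inr_eq_add_dist_base (w : W) (z : Z) :
    letI := coprodMetric w₀ z₀
    dist (Sum.inl w : W ⊕ Z) (Sum.inr z) = dist (Sum.inl w : W ⊕ Z) (Sum.inr z₀) + dist z₀ z := by
  show dist w w₀ + 1 + dist z₀ z = (dist w w₀ + 1 + dist z₀ z₀) + dist z₀ z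
  rw [dist_self]
  ring

theorem isBounded_range_diff_inl_of_close {X : Type*} {G : X → W ⊕ Z} {g : X → W}
    (hclose : letI := coprodMetric w₀ z₀; Close (Sum.inl ∘ g) G) :
    letI := coprodMetric w₀ z₀
    IsBounded (range G \ range Sum.inl) := by
  let _ := coprodMetric w₀ z₀
  obtain ⟨R, -, hR⟩ := hclose
  refine Metric.isBounded_iff_subset_closedBall (Sum.inl w₀) |>.2 ⟨R, ?_⟩
  rintro _ ⟨⟨x, rfl⟩, hx⟩
  obtain ⟨z, hz⟩ : ∃ z, G x = Sum.inr z := by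
    cases h : G x with
    | inl w => exact absurd ⟨w, h.symm⟩ hx
    | inr z => exact ⟨z, rfl⟩
  have := hR x
  rw [Function.comp_apply, hz, coprod_dist_inl_inr_eq_dist_base_add] at this
  rw [Metric.mem_closedBall, hz, dist_comm]
  linarith [dist_nonneg (x := g x) (y := w₀)]

theorem isBounded_range_diff_inr_of_close {X : Type*} {G : X → W ⊕ Z} {h : X → Z}
    (hclose : letI := coprodMetric w₀ z₀; Close (Sum.inr ∘ h) G) :
    letI := coprodMetric w₀ z₀
    IsBounded (range G \ range Sum.inr) := by
  let _ := coprodMetric w₀ z₀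
  obtain ⟨R, -, hR⟩ := hclose
  refine Metric.isBounded_iff_subset_closedBall (Sum.inr z₀) |>.2 ⟨R, ?_⟩
  rintro _ ⟨⟨x, rfl⟩, hx⟩
  obtain ⟨w, hw⟩ : ∃ w, G x = Sum.inl w := by
    cases hGx : G x with
    | inl w => exact ⟨w, rfl⟩
    | inr z => exact absurd ⟨z, hGx.symm⟩ hx
  have := hR x
  rw [Function.comp_apply, hw, dist_comm, coprod_dist_inl_inr_eq_add_dist_base w₀] at this
  rw [Metric.mem_closedBall, hw]
  linarith [dist_nonneg (x := z₀) (y := h x)]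

end Coproduct

/-- `X` with the metric `d(x, x') = d(F x, F x') + [x ≠ x']`: the indicator turns the pseudometric
pulled back along `F` into a metric without changing its coarse type. -/
def CoarsePullback {X M : Type*} (_F : X → M) : Type _ := X

namespace CoarsePullback

section Metric

variable {X M : Type*} [MetricSpace M] {F : X → M}

open Classical in
noncomputable instance : MetricSpace (CoarsePullback F) where
  dist x x' := dist (F x) (F x') + if x = x' then 0 else 1
  dist_self x := by simp
  dist_comm x x' := by
    by_cases h : x = x' <;> simp [h, eq_comm, dist_comm]
  dist_triangle x x' x'' := by
    have := dist_triangle (F x) (F x') (F x'')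
    by_cases h₁ : x = x' <;> by_cases h₂ : x' = x'' <;> by_cases h₃ : x = x'' <;>
      simp_all <;>
      linarith [dist_nonneg (x := F x) (y := F x'), dist_nonneg (x := F x') (y := F x'')]
  eq_of_dist_eq_zero {x x'} h := by
    by_contra hne
    simp only [if_neg hne] at h
    linarith [dist_nonneg (x := F x) (y := F x')]

theorem dist_le (x x' : CoarsePullback F) : dist (F x) (F x') ≤ dist x x' := by
  change _ ≤ dist (F x) (F x') + _
  split_ifs <;> simp

theorem dist_le_add_one (x x' : CoarsePullback F) : dist x x' ≤ dist (F x) (F x') + 1 := by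
  change dist (F x) (F x') + _ ≤ _
  split_ifs <;> simp

theorem lipschitzWith_elim (x₀ : CoarsePullback F) :
    letI := coprodMetric x₀ x₀
    LipschitzWith 1 (Sum.elim F F : CoarsePullback F ⊕ CoarsePullback F → M) := by
  let _ := coprodMetric x₀ x₀
  refine LipschitzWith.of_dist_le_mul fun p q => ?_
  rw [NNReal.coe_one, one_mul]
  have cross : ∀ x x' : CoarsePullback F, dist (F x) (F x') ≤ dist x x₀ + 1 + dist x₀ x' :=
    fun x x' => by
      linarith [dist_triangle (F x) (F x₀) (F x'), dist_le x x₀, dist_le x₀ x']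
  rcases p with x | x <;> rcases q with x' | x'
  · exact dist_le x x'
  · exact cross x x'
  · exact dist_comm (F x') (F x) ▸ cross x' x
  · exact dist_le x x'

end Metric

section Split

variable {X W Z : Type*}

def split (F : X → W ⊕ Z) (x : X) : CoarsePullback F ⊕ CoarsePullback F :=
  (F x).map (fun _ => x) (fun _ => x)

theorem isLeft_split (F : X → W ⊕ Z) (x : X) : (split F x).isLeft = (F x).isLeft :=
  Sum.isLeft_map _ _ _

theorem elim_split (F : X → W ⊕ Z) (x : X) :
    (Sum.elim F F : CoarsePullback F ⊕ CoarsePullback F → W ⊕ Z) (split F x) = F x := by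
  unfold split
  cases h : F x <;> exact h

theorem split_of_eq_inl {F : X → W ⊕ Z} {x : X} {w : W} (h : F x = Sum.inl w) :
    split F x = Sum.inl x := by
  unfold split
  rw [h]
  rfl

theorem split_of_eq_inr {F : X → W ⊕ Z} {x : X} {z : Z} (h : F x = Sum.inr z) :
    split F x = Sum.inr x := by
  unfold split
  rw [h]
  rfl

variable [MetricSpace W] [MetricSpace Z] (w₀ : W) (z₀ : Z) {F : X → W ⊕ Z}

theorem dist_split_le (x₀ : CoarsePullback F) (x x' : X) :
    letI := coprodMetric w₀ z₀
    letI := coprodMetric x₀ x₀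
    dist (split F x) (split F x') ≤ dist (F x) (F x') + (2 * dist (F x₀) (Sum.inl w₀) + 3) := by
  let _ := coprodMetric w₀ z₀
  let _ := coprodMetric x₀ x₀
  have cross : ∀ (x x' : CoarsePullback F) w z, F x = Sum.inl w → F x' = Sum.inr z →
      dist (Sum.inl x : CoarsePullback F ⊕ CoarsePullback F) (Sum.inr x') ≤
        dist (F x) (F x') + (2 * dist (F x₀) (Sum.inl w₀) + 3) := by
    intro x x' w z hx hx'
    change dist x x₀ + 1 + dist x₀ x' ≤ _
    have h₁ := dist_le_add_one x x₀
    have h₂ := dist_le_add_one x₀ x'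
    have h₃ := dist_triangle (F x) (Sum.inl w₀) (F x₀)
    have h₄ := dist_triangle (F x₀) (Sum.inl w₀) (F x')
    simp only [hx, hx'] at h₁ h₂ h₃ h₄ ⊢
    have : dist (Sum.inl w : W ⊕ Z) (Sum.inl w₀) = dist w w₀ := rfl
    linarith [coprod_dist_inl_inr_eq_dist_base_add w₀ z₀ w z, dist_comm (F x₀) (Sum.inl w₀)]
  have same : ∀ x x' : CoarsePullback F, dist x x' ≤
      dist (F x) (F x') + (2 * dist (F x₀) (Sum.inl w₀) + 3) := fun x x' => by
    linarith [dist_le_add_one x x', dist_nonneg (x := F x₀) (y := Sum.inl w₀)]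
  rcases hx : F x with w | z <;> rcases hx' : F x' with w' | z'
  · rw [split_of_eq_inl hx, split_of_eq_inl hx', ← hx, ← hx']
    exact same x x'
  · rw [split_of_eq_inl hx, split_of_eq_inr hx', ← hx, ← hx']
    exact cross x x' w z' hx hx'
  · rw [split_of_eq_inr hx, split_of_eq_inl hx', ← hx, ← hx', dist_comm (F x)]
    exact (dist_comm _ _).trans_le (cross x' x w' z hx' hx)
  · rw [split_of_eq_inr hx, split_of_eq_inr hx', ← hx, ← hx']
    exact same x x'

theorem isCoarse_split [PseudoMetricSpace X] (x₀ : CoarsePullback F)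
    (hF : letI := coprodMetric w₀ z₀; IsCoarse F) :
    letI := coprodMetric w₀ z₀
    letI := coprodMetric x₀ x₀
    IsCoarse (split F) := by
  let _ := coprodMetric w₀ z₀
  let _ := coprodMetric x₀ x₀
  refine ⟨fun R hR => ?_, ?_⟩
  · obtain ⟨S, hS, hFS⟩ := hF.1 R hR
    refine ⟨S + (2 * dist (F x₀) (Sum.inl w₀) + 3), by positivity, fun x x' h => ?_⟩
    exact (dist_split_le w₀ z₀ x₀ x x').trans (by gcongr; exact hFS x x' h)
  · refine ProperMap.of_comp_of_lipschitzWith ?_ (lipschitzWith_elim x₀)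
    simpa only [Function.comp_def, elim_split] using hF.2

end Split

end CoarsePullback

open CoarsePullback in
theorem CondC.isBounded_range_diff {X : Type*} [MetricSpace X] (hX : CondC X)
    {W Z : Type*} [MetricSpace W] [MetricSpace Z] (w₀ : W) (z₀ : Z) {F : X → W ⊕ Z}
    (hF : letI := coprodMetric w₀ z₀; IsCoarse F) :
    letI := coprodMetric w₀ z₀
    IsBounded (range F \ range Sum.inl) ∨ IsBounded (range F \ range Sum.inr) := by
  let _ := coprodMetric w₀ z₀
  rcases isEmpty_or_nonempty X with hempty | hnonempty
  · simp [range_eq_empty]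
  obtain ⟨x₀⟩ : Nonempty (CoarsePullback F) := hnonempty
  let _ := coprodMetric x₀ x₀
  have hsplit := isCoarse_split w₀ z₀ x₀ hF
  have hψ := lipschitzWith_elim (F := F) x₀
  rcases hX (CoarsePullback F) (CoarsePullback F) x₀ x₀ (split F) hsplit with
    ⟨g, -, hg⟩ | ⟨h, -, hh⟩
  · refine .inl ((hψ.isBounded_image (isBounded_range_diff_inl_of_close x₀ x₀ hg)).subset ?_)
    rintro _ ⟨⟨x, rfl⟩, hx⟩
    refine ⟨split F x, ⟨mem_range_self x, ?_⟩, elim_split F x⟩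
    simpa [range_inl, isLeft_split] using hx
  · refine .inr ((hψ.isBounded_image (isBounded_range_diff_inr_of_close x₀ x₀ hh)).subset ?_)
    rintro _ ⟨⟨x, rfl⟩, hx⟩
    refine ⟨split F x, ⟨mem_range_self x, ?_⟩, elim_split F x⟩
    simpa [range_inr, isLeft_split] using hx

/-- condition (C) is preserved by surjective coarse maps. -/
theorem condC_of_surjective_coarse_map {X : Type u} {Y : Type v} [MetricSpace X] [MetricSpace Y]
    (f : X → Y) (hf : IsCoarse f) (hsurj : Function.Surjective f) (hX : CondC X) :
    CondC Y := by
  intro W Z _ _ w₀ z₀ G hG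
  let _ := coprodMetric w₀ z₀
  have : Nonempty W := ⟨w₀⟩
  have : Nonempty Z := ⟨z₀⟩
  have hbdd := hX.isBounded_range_diff w₀ z₀ (hf.comp hG)
  rw [hsurj.range_comp] at hbdd
  exact hbdd.imp
    ((isometry_inl_coprod w₀ z₀).exists_isCoarse_close_of_isBounded_range_diff hG)
    ((isometry_inr_coprod w₀ z₀).exists_isCoarse_close_of_isBounded_range_diff hG)
end

section
/- Let X and Y be metric spaces with coarse coproduct X + Y and inclusions ι_X, ι_Y. Then the map F : B_h(X+Y)/B_0(X+Y) → (B_h(X)/B_0(X)) × (B_h(Y)/B_0(Y)) sending the class [f] to the pair ([f ∘ ι_X], [f ∘ ι_Y]) is a well-defined bijective unital star-algebra homomorphism. (Consequently the Higson corona preserves binary coarse coproducts.) -/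
open Bornology

def IsBoundedFn {W : Type*} (f : W → ℂ) : Prop :=
  ∃ C : ℝ, ∀ x : W, ‖f x‖ ≤ C

/-- A bounded function to `ℂ` is *slowly oscillating* if for all `ε > 0` and `R > 0` there is a
bounded set outside of which points at distance at most `R` have values at distance at most `ε`. -/
def SlowlyOscillating {W : Type*} [PseudoMetricSpace W] (f : W → ℂ) : Prop :=
  ∀ ε : ℝ, 0 < ε → ∀ R : ℝ, 0 < R → ∃ B : Set W, IsBounded B ∧
    ∀ x ∉ B, ∀ x' ∉ B, dist x x' ≤ R → ‖f x - f x'‖ ≤ ε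

/-- A function *tends to zero at infinity* if outside of suitable bounded sets it is
uniformly small. -/
def TendsToZeroAtInfinity {W : Type*} [PseudoMetricSpace W] (f : W → ℂ) : Prop :=
  ∀ ε : ℝ, 0 < ε → ∃ B : Set W, IsBounded B ∧ ∀ x ∉ B, ‖f x‖ ≤ ε

/-- Membership in `B_h(W)`: bounded and slowly oscillating. -/
def MemBh {W : Type*} [PseudoMetricSpace W] (f : W → ℂ) : Prop :=
  IsBoundedFn f ∧ SlowlyOscillating f

/-- Membership in `B_0(W)`: bounded and tending to zero at infinity. -/
def MemB0 {W : Type*} [PseudoMetricSpace W] (f : W → ℂ) : Prop :=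
  IsBoundedFn f ∧ TendsToZeroAtInfinity f

/-! The coarse structure of `X + Y` is the sum of those of `X` and `Y`. A set is bounded iff its
traces on `X` and on `Y` are, so the cobounded filter of `X + Y` is the supremum of the images
of those of `X` and `Y`. Two points of different summands at distance `≤ R` both lie within `R`
of the base points, so the same decomposition holds for the filter of `R`-close pairs going to
infinity.
Tending to zero at infinity and slow oscillation are convergence statements along these two
filters, hence a function on `X + Y` lies in `B_0` (resp. `B_h`) iff both of its restrictions do:
this is well-definedness and injectivity of `F`, and surjectivity by gluing with `Sum.elim`. -/

open Filter Topology

section Bounded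

variable {W : Type*}

theorem IsBoundedFn.comp {V : Type*} {f : W → ℂ} (hf : IsBoundedFn f) (g : V → W) :
    IsBoundedFn (f ∘ g) :=
  let ⟨C, hC⟩ := hf; ⟨C, fun x => hC (g x)⟩

theorem IsBoundedFn.isBoundedUnder {f : W → ℂ} (hf : IsBoundedFn f) (l : Filter W) :
    IsBoundedUnder (· ≤ ·) l (norm ∘ f) :=
  isBoundedUnder_of hf

theorem isBoundedFn_const (c : ℂ) : IsBoundedFn (fun _ : W => c) :=
  ⟨‖c‖, fun _ => le_rfl⟩

theorem IsBoundedFn.add {f g : W → ℂ} (hf : IsBoundedFn f) (hg : IsBoundedFn g) :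
    IsBoundedFn (f + g) :=
  let ⟨C, hC⟩ := hf; let ⟨D, hD⟩ := hg
  ⟨C + D, fun x => (norm_add_le _ _).trans (add_le_add (hC x) (hD x))⟩

theorem IsBoundedFn.mul {f g : W → ℂ} (hf : IsBoundedFn f) (hg : IsBoundedFn g) :
    IsBoundedFn (f * g) :=
  let ⟨C, hC⟩ := hf; let ⟨D, hD⟩ := hg
  ⟨C * D, fun x => (norm_mul _ _).trans_le <|
    mul_le_mul (hC x) (hD x) (norm_nonneg _) ((norm_nonneg _).trans (hC x))⟩

theorem IsBoundedFn.star {f : W → ℂ} (hf : IsBoundedFn f) : IsBoundedFn (star f) :=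
  let ⟨C, hC⟩ := hf; ⟨C, fun x => (norm_star (f x)).trans_le (hC x)⟩

theorem isBoundedFn_sum_iff {X Y : Type*} {f : X ⊕ Y → ℂ} :
    IsBoundedFn f ↔ IsBoundedFn (f ∘ Sum.inl) ∧ IsBoundedFn (f ∘ Sum.inr) := by
  refine ⟨fun hf => ⟨hf.comp _, hf.comp _⟩, fun ⟨⟨C, hC⟩, ⟨D, hD⟩⟩ => ⟨max C D, ?_⟩⟩
  rintro (x | y)
  · exact (hC x).trans (le_max_left _ _)
  · exact (hD y).trans (le_max_right _ _)

end Bounded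

section Filters

variable {W : Type*} [PseudoMetricSpace W]

theorem hasBasis_cobounded_compl : (cobounded W).HasBasis IsBounded compl :=
  ⟨fun t => ⟨fun ht => ⟨tᶜ, isBounded_compl_iff.2 ht, (compl_compl t).subset⟩,
    fun ⟨_, hB, hBt⟩ => mem_of_superset hB hBt⟩⟩

def closePairsAtInfinity (W : Type*) [PseudoMetricSpace W] (R : ℝ) : Filter (W × W) :=
  (cobounded W ×ˢ cobounded W) ⊓ 𝓟 {p | dist p.1 p.2 ≤ R}

theorem hasBasis_closePairsAtInfinity (R : ℝ) :
    (closePairsAtInfinity W R).HasBasis IsBounded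
      (fun B => {p | p.1 ∉ B ∧ p.2 ∉ B ∧ dist p.1 p.2 ≤ R}) :=
  (hasBasis_cobounded_compl.prod_self.inf_principal _).congr (fun _ => Iff.rfl)
    (fun _ _ => by ext; simp [and_assoc])

theorem tendsto_fst_closePairsAtInfinity (R : ℝ) :
    Tendsto Prod.fst (closePairsAtInfinity W R) (cobounded W) :=
  tendsto_fst.mono_left inf_le_left

theorem tendsto_snd_closePairsAtInfinity (R : ℝ) :
    Tendsto Prod.snd (closePairsAtInfinity W R) (cobounded W) :=
  tendsto_snd.mono_left inf_le_left

theorem tendsToZeroAtInfinity_iff {f : W → ℂ} :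
    TendsToZeroAtInfinity f ↔ Tendsto f (cobounded W) (𝓝 0) := by
  simp only [hasBasis_cobounded_compl.tendsto_iff Metric.nhds_basis_closedBall,
    TendsToZeroAtInfinity, Set.mem_compl_iff, Metric.mem_closedBall, dist_zero_right]

theorem slowlyOscillating_iff {f : W → ℂ} :
    SlowlyOscillating f ↔ ∀ R, 0 < R →
      Tendsto (fun p => f p.1 - f p.2) (closePairsAtInfinity W R) (𝓝 0) := by
  simp only [(hasBasis_closePairsAtInfinity _).tendsto_iff Metric.nhds_basis_closedBall,
    SlowlyOscillating, Metric.mem_closedBall, dist_zero_right, Set.mem_ofPred_eq, and_imp,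
    Prod.forall]
  refine forall₂_comm.trans (forall₄_congr fun _ _ _ _ => exists_congr fun _ => and_congr_right
    fun _ => ⟨fun h a b ha hb => h a ha b hb, fun h a ha b hb => h a b ha hb⟩)

end Filters

section HigsonAlgebra

variable {W : Type*} [PseudoMetricSpace W] {f g : W → ℂ}

theorem memBh_const (c : ℂ) : MemBh (fun _ : W => c) :=
  ⟨isBoundedFn_const c, slowlyOscillating_iff.2 fun _ _ => by
    simpa only [sub_self] using tendsto_const_nhds⟩

theorem MemBh.add (hf : MemBh f) (hg : MemBh g) : MemBh (f + g) := by
  refine ⟨hf.1.add hg.1, slowlyOscillating_iff.2 fun R hR => ?_⟩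
  have := (slowlyOscillating_iff.1 hf.2 R hR).add (slowlyOscillating_iff.1 hg.2 R hR)
  simpa only [Pi.add_apply, add_sub_add_comm, add_zero] using this

theorem MemBh.mul (hf : MemBh f) (hg : MemBh g) : MemBh (f * g) := by
  refine ⟨hf.1.mul hg.1, slowlyOscillating_iff.2 fun R hR => ?_⟩
  have hfg : Tendsto (fun p : W × W => f p.1 * (g p.1 - g p.2))
      (closePairsAtInfinity W R) (𝓝 0) :=
    isBoundedUnder_le_mul_tendsto_zero ((hf.1.comp Prod.fst).isBoundedUnder _)
      (slowlyOscillating_iff.1 hg.2 R hR)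
  have hgf : Tendsto (fun p : W × W => (f p.1 - f p.2) * g p.2)
      (closePairsAtInfinity W R) (𝓝 0) :=
    (slowlyOscillating_iff.1 hf.2 R hR).zero_mul_isBoundedUnder_le
      ((hg.1.comp Prod.snd).isBoundedUnder _)
  convert hfg.add hgf using 2 with p
  · simp only [Pi.mul_apply]; ring
  · rw [add_zero]

theorem MemBh.const_smul (c : ℂ) (hf : MemBh f) : MemBh (c • f) :=
  (memBh_const c).mul hf

theorem MemBh.star (hf : MemBh f) : MemBh (star f) := by
  refine ⟨hf.1.star, slowlyOscillating_iff.2 fun R hR => ?_⟩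
  simpa only [star_zero, star_sub, Pi.star_apply] using
    (slowlyOscillating_iff.1 hf.2 R hR).star

theorem MemB0.memBh (hf : MemB0 f) : MemBh f := by
  refine ⟨hf.1, slowlyOscillating_iff.2 fun R _ => ?_⟩
  have hf0 := tendsToZeroAtInfinity_iff.1 hf.2
  simpa only [sub_zero, Function.comp_apply] using
    (hf0.comp (tendsto_fst_closePairsAtInfinity R)).sub
      (hf0.comp (tendsto_snd_closePairsAtInfinity R))

theorem MemB0.add (hf : MemB0 f) (hg : MemB0 g) : MemB0 (f + g) :=
  ⟨hf.1.add hg.1, tendsToZeroAtInfinity_iff.2 <| by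
    rw [← add_zero (0 : ℂ)]
    exact (tendsToZeroAtInfinity_iff.1 hf.2).add (tendsToZeroAtInfinity_iff.1 hg.2)⟩

theorem MemBh.mul_memB0 (hf : MemBh f) (hg : MemB0 g) : MemB0 (f * g) :=
  ⟨hf.1.mul hg.1, tendsToZeroAtInfinity_iff.2 <|
    isBoundedUnder_le_mul_tendsto_zero (hf.1.isBoundedUnder _)
      (tendsToZeroAtInfinity_iff.1 hg.2)⟩

theorem MemB0.const_smul (c : ℂ) (hf : MemB0 f) : MemB0 (c • f) :=
  (memBh_const c).mul_memB0 hf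

theorem MemB0.star (hf : MemB0 f) : MemB0 (star f) :=
  ⟨hf.1.star, tendsToZeroAtInfinity_iff.2 <| by
    rw [← star_zero]
    exact (tendsToZeroAtInfinity_iff.1 hf.2).star⟩

theorem memB0_zero : MemB0 (0 : W → ℂ) :=
  ⟨⟨0, fun _ => norm_zero.le⟩, tendsToZeroAtInfinity_iff.2 tendsto_const_nhds⟩

end HigsonAlgebra

section Coproduct

variable {X Y : Type*} [MetricSpace X] [MetricSpace Y] (x₀ : X) (y₀ : Y)

theorem isometry_inl_coprodMetric :
    letI := coprodMetric x₀ y₀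
    Isometry (Sum.inl : X → X ⊕ Y) :=
  letI := coprodMetric x₀ y₀
  Isometry.of_dist_eq fun _ _ => rfl

theorem isometry_inr_coprodMetric :
    letI := coprodMetric x₀ y₀
    Isometry (Sum.inr : Y → X ⊕ Y) :=
  letI := coprodMetric x₀ y₀
  Isometry.of_dist_eq fun _ _ => rfl

theorem isBounded_coprodMetric_iff {B : Set (X ⊕ Y)} :
    letI := coprodMetric x₀ y₀
    IsBounded B ↔ IsBounded (Sum.inl ⁻¹' B) ∧ IsBounded (Sum.inr ⁻¹' B) := by
  let := coprodMetric x₀ y₀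
  have hl := isometry_inl_coprodMetric x₀ y₀
  have hr := isometry_inr_coprodMetric x₀ y₀
  refine ⟨fun hB => ⟨hl.antilipschitz.isBounded_preimage hB,
    hr.antilipschitz.isBounded_preimage hB⟩, fun ⟨hBl, hBr⟩ => ?_⟩
  refine ((hl.lipschitz.isBounded_image hBl).union (hr.lipschitz.isBounded_image hBr)).subset ?_
  rintro (x | y) h
  · exact Or.inl ⟨x, h, rfl⟩
  · exact Or.inr ⟨y, h, rfl⟩

theorem cobounded_coprodMetric :
    letI := coprodMetric x₀ y₀
    cobounded (X ⊕ Y) = map Sum.inl (cobounded X) ⊔ map Sum.inr (cobounded Y) := by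
  let := coprodMetric x₀ y₀
  ext s
  simp only [mem_sup, mem_map, ← isCobounded_def, ← isBounded_compl_iff,
    isBounded_coprodMetric_iff x₀ y₀, Set.preimage_compl]

theorem closePairsAtInfinity_coprodMetric (R : ℝ) :
    letI := coprodMetric x₀ y₀
    closePairsAtInfinity (X ⊕ Y) R =
      map (Prod.map Sum.inl Sum.inl) (closePairsAtInfinity X R) ⊔
        map (Prod.map Sum.inr Sum.inr) (closePairsAtInfinity Y R) := by
  let := coprodMetric x₀ y₀
  have basis := hasBasis_closePairsAtInfinity (W := X ⊕ Y) R
  refine le_antisymm ?_ (sup_le ?_ ?_)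
  · refine (((hasBasis_closePairsAtInfinity R).map _).sup
      ((hasBasis_closePairsAtInfinity R).map _)).ge_iff.2 ?_
    rintro ⟨Bx, By⟩ ⟨hBx, hBy⟩
    have cross : ∀ (x : X) (y : Y), dist (Sum.inl x : X ⊕ Y) (Sum.inr y) ≤ R →
        dist x x₀ ≤ R ∧ dist y y₀ ≤ R := fun x y h => by
      have : dist x x₀ + 1 + dist y₀ y ≤ R := h
      constructor <;> linarith [dist_nonneg (x := x) (y := x₀), dist_comm y y₀,
        dist_nonneg (x := y₀) (y := y)]
    refine basis.mem_iff.2 ⟨(Sum.elim (Bx ∪ Metric.closedBall x₀ R : Set X)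
      (By ∪ Metric.closedBall y₀ R : Set Y) : Set (X ⊕ Y)),
      (isBounded_coprodMetric_iff x₀ y₀).2
        ⟨hBx.union Metric.isBounded_closedBall, hBy.union Metric.isBounded_closedBall⟩, ?_⟩
    rintro ⟨x | y, x' | y'⟩ ⟨h, h', hd⟩
    · exact Or.inl ⟨(x, x'), ⟨fun hx => h (Or.inl hx), fun hx => h' (Or.inl hx), hd⟩, rfl⟩
    · exact (h (Or.inr (cross x y' hd).1)).elim
    · exact (h' (Or.inr (cross x' y (by rwa [dist_comm] at hd)).1)).elim
    · exact Or.inr ⟨(y, y'), ⟨fun hy => h (Or.inl hy), fun hy => h' (Or.inl hy), hd⟩, rfl⟩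
  · exact (hasBasis_closePairsAtInfinity R).tendsto_iff basis |>.2 fun B hB =>
      ⟨_, ((isBounded_coprodMetric_iff x₀ y₀).1 hB).1, fun _ hp => hp⟩
  · exact (hasBasis_closePairsAtInfinity R).tendsto_iff basis |>.2 fun B hB =>
      ⟨_, ((isBounded_coprodMetric_iff x₀ y₀).1 hB).2, fun _ hp => hp⟩

theorem memB0_coprodMetric_iff {f : X ⊕ Y → ℂ} :
    letI := coprodMetric x₀ y₀
    MemB0 f ↔ MemB0 (f ∘ Sum.inl) ∧ MemB0 (f ∘ Sum.inr) := by
  let := coprodMetric x₀ y₀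
  simp only [MemB0, isBoundedFn_sum_iff (f := f), tendsToZeroAtInfinity_iff,
    cobounded_coprodMetric x₀ y₀, tendsto_sup, tendsto_map'_iff]
  tauto

theorem memBh_coprodMetric_iff {f : X ⊕ Y → ℂ} :
    letI := coprodMetric x₀ y₀
    MemBh f ↔ MemBh (f ∘ Sum.inl) ∧ MemBh (f ∘ Sum.inr) := by
  let := coprodMetric x₀ y₀
  simp only [MemBh, isBoundedFn_sum_iff (f := f), slowlyOscillating_iff,
    closePairsAtInfinity_coprodMetric x₀ y₀, tendsto_sup, tendsto_map'_iff, forall₂_and]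
  tauto

end Coproduct

/-- restriction along the two inclusions induces a well-defined bijective unital
star-algebra homomorphism `B_h(X+Y)/B_0(X+Y) → (B_h(X)/B_0(X)) × (B_h(Y)/B_0(Y))`, stated here
at the level of representatives: `B_h` is a unital star-subalgebra and `B_0` a star-closed
ideal; restriction preserves `B_h` and `B_0` (well-definedness) and all algebra operations
(homomorphism); and the induced map on classes is injective and surjective. -/
theorem higson_corona_preserves_coproducts {X Y : Type*} [MetricSpace X] [MetricSpace Y]
    (x₀ : X) (y₀ : Y) :
    letI := coprodMetric x₀ y₀
    -- `B_h` is a unital star-subalgebra of the functions on `X ⊕ Y`,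
    -- and `B_0` is a star-closed ideal of `B_h`:
    (MemBh (1 : X ⊕ Y → ℂ)
      ∧ (∀ f g : X ⊕ Y → ℂ, MemBh f → MemBh g → MemBh (f + g) ∧ MemBh (f * g))
      ∧ (∀ (c : ℂ) (f : X ⊕ Y → ℂ), MemBh f → MemBh (c • f))
      ∧ (∀ f : X ⊕ Y → ℂ, MemBh f → MemBh (star f))
      ∧ (∀ f : X ⊕ Y → ℂ, MemB0 f → MemBh f)
      ∧ (∀ f g : X ⊕ Y → ℂ, MemB0 f → MemB0 g → MemB0 (f + g))
      ∧ (∀ f g : X ⊕ Y → ℂ, MemBh f → MemB0 g → MemB0 (f * g))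
      ∧ (∀ (c : ℂ) (f : X ⊕ Y → ℂ), MemB0 f → MemB0 (c • f))
      ∧ (∀ f : X ⊕ Y → ℂ, MemB0 f → MemB0 (star f))) ∧
    -- the map F is well defined:
    (∀ f : X ⊕ Y → ℂ, MemBh f → MemBh (f ∘ Sum.inl) ∧ MemBh (f ∘ Sum.inr)) ∧
    (∀ f : X ⊕ Y → ℂ, MemB0 f → MemB0 (f ∘ Sum.inl) ∧ MemB0 (f ∘ Sum.inr)) ∧
    -- F is a unital star-algebra homomorphism (on representatives):
    ((1 : X ⊕ Y → ℂ) ∘ Sum.inl = 1 ∧ (1 : X ⊕ Y → ℂ) ∘ Sum.inr = 1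
      ∧ (∀ f g : X ⊕ Y → ℂ, (f + g) ∘ Sum.inl = f ∘ Sum.inl + g ∘ Sum.inl
          ∧ (f + g) ∘ Sum.inr = f ∘ Sum.inr + g ∘ Sum.inr)
      ∧ (∀ f g : X ⊕ Y → ℂ, (f * g) ∘ Sum.inl = (f ∘ Sum.inl) * (g ∘ Sum.inl)
          ∧ (f * g) ∘ Sum.inr = (f ∘ Sum.inr) * (g ∘ Sum.inr))
      ∧ (∀ (c : ℂ) (f : X ⊕ Y → ℂ), (c • f) ∘ Sum.inl = c • (f ∘ Sum.inl)
          ∧ (c • f) ∘ Sum.inr = c • (f ∘ Sum.inr))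
      ∧ (∀ f : X ⊕ Y → ℂ, (star f) ∘ Sum.inl = star (f ∘ Sum.inl)
          ∧ (star f) ∘ Sum.inr = star (f ∘ Sum.inr))) ∧
    -- F is injective:
    (∀ f g : X ⊕ Y → ℂ, MemBh f → MemBh g →
      MemB0 (f ∘ Sum.inl - g ∘ Sum.inl) → MemB0 (f ∘ Sum.inr - g ∘ Sum.inr) →
      MemB0 (f - g)) ∧
    -- F is surjective:
    (∀ (u : X → ℂ) (v : Y → ℂ), MemBh u → MemBh v →
      ∃ f : X ⊕ Y → ℂ, MemBh f ∧ MemB0 (f ∘ Sum.inl - u) ∧ MemB0 (f ∘ Sum.inr - v)) := by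
  let := coprodMetric x₀ y₀
  refine ⟨⟨memBh_const 1, fun _ _ hf hg => ⟨hf.add hg, hf.mul hg⟩,
      fun c _ hf => hf.const_smul c, fun _ hf => hf.star, fun _ hf => hf.memBh,
      fun _ _ hf hg => hf.add hg, fun _ _ hf hg => hf.mul_memB0 hg,
      fun c _ hf => hf.const_smul c, fun _ hf => hf.star⟩,
    fun _ => (memBh_coprodMetric_iff x₀ y₀).1, fun _ => (memB0_coprodMetric_iff x₀ y₀).1,
    ⟨rfl, rfl, fun _ _ => ⟨rfl, rfl⟩, fun _ _ => ⟨rfl, rfl⟩, fun _ _ => ⟨rfl, rfl⟩,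
      fun _ => ⟨rfl, rfl⟩⟩,
    fun _ _ _ _ hl hr => (memB0_coprodMetric_iff x₀ y₀).2 ⟨hl, hr⟩,
    fun u v hu hv => ⟨Sum.elim u v, (memBh_coprodMetric_iff x₀ y₀).2 ⟨hu, hv⟩,
      sub_self u ▸ memB0_zero, sub_self v ▸ memB0_zero⟩⟩
end

section
/- Let X be a metric space and let A and B be closed subspaces with X = A ∪ B and A ∩ B nonempty, where A, B and A ∩ B carry the metrics induced from X. Then X = A ∪ B is an ω-excisive decomposition if and only if the square of inclusions A ∩ B → A, A ∩ B → B, A → X, B → X is a pushout in the coarse category of metric spaces; that is, if and only if for every metric space Z and all coarse maps f : A → Z and g : B → Z whose restrictions to A ∩ B are close, there exists a coarse map h : X → Z whose restriction to A is close to f and whose restriction to B is close to g, and any two such maps h are close to each other. -/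
open Bornology

/-- `X = A ∪ B` is an ω-excisive decomposition: for each `R > 0` there is `S > 0` with
`B(A,R) ∩ B(B,R) ⊆ B(A ∩ B, S)`. -/
def OmegaExcisive {X : Type*} [MetricSpace X] (A B : Set X) : Prop :=
  ∀ R : ℝ, 0 < R → ∃ S : ℝ, 0 < S ∧
    ∀ x : X, (∃ a ∈ A, dist x a < R) → (∃ b ∈ B, dist x b < R) →
      ∃ c ∈ A ∩ B, dist x c < S

/-- A coarse map `h : X → Z` mediates the cocone given by coarse maps `f` on `A` and `g` on
`B` when its restriction to `A` is close to `f` and its restriction to `B` is close to `g`. -/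
def Mediates {X Z : Type*} [MetricSpace X] [MetricSpace Z] (A B : Set X)
    (f : ↥A → Z) (g : ↥B → Z) (h : X → Z) : Prop :=
  IsCoarse h ∧
    (∃ R : ℝ, 0 < R ∧ ∀ (x : X) (hx : x ∈ A), dist (h x) (f ⟨x, hx⟩) ≤ R) ∧
    (∃ R : ℝ, 0 < R ∧ ∀ (x : X) (hx : x ∈ B), dist (h x) (g ⟨x, hx⟩) ≤ R)

/-- for closed `A`, `B` covering `X` with `A ∩ B` nonempty, the decomposition
`X = A ∪ B` is ω-excisive iff the square of inclusions is a pushout in the coarse category. -/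
theorem omegaExcisive_iff_pushout {X : Type u} [MetricSpace X] (A B : Set X)
    (hA : IsClosed A) (hB : IsClosed B) (hcover : A ∪ B = Set.univ)
    (hne : (A ∩ B).Nonempty) :
    OmegaExcisive A B ↔
      ∀ (Z : Type u) [MetricSpace Z] (f : ↥A → Z) (g : ↥B → Z),
        IsCoarse f → IsCoarse g →
        (∃ R : ℝ, 0 < R ∧ ∀ (x : X) (hx : x ∈ A ∩ B),
          dist (f ⟨x, hx.1⟩) (g ⟨x, hx.2⟩) ≤ R) →
        (∃ h : X → Z, Mediates A B f g h) ∧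
          ∀ h₁ h₂ : X → Z, Mediates A B f g h₁ → Mediates A B f g h₂ → Close h₁ h₂ := by
  
  classical
  obtain ⟨x₀, hx₀A, hx₀B⟩ := hne
  have hmemB : ∀ x : X, x ∉ A → x ∈ B := by
    intro x hx
    have hx' : x ∈ A ∪ B := by rw [hcover]; trivial
    exact hx'.resolve_left hx
  constructor
  · -- ω-excisive → pushout
    rintro hex Z _ f g hf hg ⟨R₀, hR₀, hfg⟩
    constructor
    · -- existence of mediating map
      set h : X → Z := fun x => if hx : x ∈ A then f ⟨x, hx⟩ else g ⟨x, hmemB x hx⟩ with hdef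
      have hvalA : ∀ (x : X) (hx : x ∈ A), h x = f ⟨x, hx⟩ := fun x hx => dif_pos hx
      have hvalB : ∀ (x : X) (hx : x ∉ A), h x = g ⟨x, hmemB x hx⟩ := fun x hx => dif_neg hx
      refine ⟨h, ⟨?_, ?_⟩, ?_, ?_⟩
      · -- bornologous
        intro R hR
        obtain ⟨S, hS, hSex⟩ := hex (R + 1) (by linarith)
        obtain ⟨Sf, hSf, hSf'⟩ := hf.1 (R + S) (by linarith)
        obtain ⟨Sg, hSg, hSg'⟩ := hg.1 (R + S) (by linarith)
        refine ⟨Sf + R₀ + Sg, by linarith, ?_⟩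
        have key : ∀ x x' : X, dist x x' ≤ R → ∀ hx : x ∈ A, x' ∉ A →
            dist (h x) (h x') ≤ Sf + R₀ + Sg := by
          intro x x' hxx' hx hx'
          obtain ⟨c, hcAB, hcd⟩ := hSex x' ⟨x, hx, by rw [dist_comm]; linarith⟩
            ⟨x', hmemB x' hx', by simp; linarith⟩
          rw [hvalA x hx, hvalB x' hx']
          have h1 : dist (f ⟨x, hx⟩) (f ⟨c, hcAB.1⟩) ≤ Sf := by
            apply hSf'
            rw [Subtype.dist_eq]
            calc dist x c ≤ dist x x' + dist x' c := dist_triangle _ _ _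
              _ ≤ R + S := by linarith
          have h2 : dist (f ⟨c, hcAB.1⟩) (g ⟨c, hcAB.2⟩) ≤ R₀ := hfg c hcAB
          have h3 : dist (g ⟨c, hcAB.2⟩) (g ⟨x', hmemB x' hx'⟩) ≤ Sg := by
            apply hSg'
            rw [Subtype.dist_eq]
            rw [dist_comm] at hcd
            simp only []
            linarith
          calc dist (f ⟨x, hx⟩) (g ⟨x', hmemB x' hx'⟩)
              ≤ dist (f ⟨x, hx⟩) (f ⟨c, hcAB.1⟩) + dist (f ⟨c, hcAB.1⟩) (g ⟨c, hcAB.2⟩)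
                + dist (g ⟨c, hcAB.2⟩) (g ⟨x', hmemB x' hx'⟩) := dist_triangle4 _ _ _ _
            _ ≤ Sf + R₀ + Sg := by linarith
        intro x x' hxx'
        by_cases hx : x ∈ A <;> by_cases hx' : x' ∈ A
        · rw [hvalA x hx, hvalA x' hx']
          have := hSf' ⟨x, hx⟩ ⟨x', hx'⟩ (by rw [Subtype.dist_eq]; show dist x x' ≤ R + S; linarith)
          linarith
        · exact key x x' hxx' hx hx'
        · rw [dist_comm]
          exact key x' x (by rw [dist_comm]; exact hxx') hx' hx
        · rw [hvalB x hx, hvalB x' hx']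
          have := hSg' ⟨x, hmemB x hx⟩ ⟨x', hmemB x' hx'⟩
            (by rw [Subtype.dist_eq]; show dist x x' ≤ R + S; linarith)
          linarith
      · -- proper
        intro C hC
        obtain ⟨rf, hrf⟩ := (Metric.isBounded_iff_subset_closedBall
          (⟨x₀, hx₀A⟩ : ↥A)).1 (hf.2 C hC)
        obtain ⟨rg, hrg⟩ := (Metric.isBounded_iff_subset_closedBall
          (⟨x₀, hx₀B⟩ : ↥B)).1 (hg.2 C hC)
        rw [Metric.isBounded_iff_subset_closedBall x₀]
        refine ⟨max rf rg, ?_⟩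
        intro x hxC
        simp only [Metric.mem_closedBall]
        by_cases hx : x ∈ A
        · have : (⟨x, hx⟩ : ↥A) ∈ f ⁻¹' C := by
            simp only [Set.mem_preimage]; rw [← hvalA x hx]; exact hxC
          have := hrf this
          rw [Metric.mem_closedBall, Subtype.dist_eq] at this
          exact le_trans this (le_max_left _ _)
        · have : (⟨x, hmemB x hx⟩ : ↥B) ∈ g ⁻¹' C := by
            simp only [Set.mem_preimage]; rw [← hvalB x hx]; exact hxC
          have := hrg this
          rw [Metric.mem_closedBall, Subtype.dist_eq] at this
          exact le_trans this (le_max_right _ _)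
      · -- close to f on A
        refine ⟨1, one_pos, ?_⟩
        intro x hx
        rw [hvalA x hx]
        simp
      · -- close to g on B
        refine ⟨R₀ + 1, by linarith, ?_⟩
        intro x hx
        by_cases hxA : x ∈ A
        · rw [hvalA x hxA]
          have := hfg x ⟨hxA, hx⟩
          calc dist (f ⟨x, hxA⟩) (g ⟨x, hx⟩) ≤ R₀ := this
            _ ≤ R₀ + 1 := by linarith
        · rw [hvalB x hxA]
          simp
          linarith
    · -- uniqueness up to closeness
      rintro h₁ h₂ ⟨-, ⟨R₁, hR₁, h₁A⟩, ⟨S₁, hS₁, h₁B⟩⟩ ⟨-, ⟨R₂, hR₂, h₂A⟩, ⟨S₂, hS₂, h₂B⟩⟩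
      refine ⟨R₁ + R₂ + S₁ + S₂, by linarith, ?_⟩
      intro x
      by_cases hx : x ∈ A
      · have := h₁A x hx
        have := h₂A x hx
        have := dist_triangle (h₁ x) (f ⟨x, hx⟩) (h₂ x)
        rw [dist_comm (f ⟨x, hx⟩)] at this
        linarith
      · have hxB := hmemB x hx
        have := h₁B x hxB
        have := h₂B x hxB
        have := dist_triangle (h₁ x) (g ⟨x, hxB⟩) (h₂ x)
        rw [dist_comm (g ⟨x, hxB⟩)] at this
        linarith
  · -- pushout → ω-excisive
    intro H R hR
    set f : ↥A → ULift.{u} ℝ := fun a => ULift.up (dist a.1 x₀) with hfdef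
    set g : ↥B → ULift.{u} ℝ :=
      fun b => ULift.up (dist b.1 x₀ + 2 * Metric.infDist b.1 (A ∩ B)) with hgdef
    have hfc : IsCoarse f := by
      constructor
      · intro R' hR'
        refine ⟨R', hR', ?_⟩
        intro a a' hd
        rw [Subtype.dist_eq] at hd
        simp only [hfdef, ULift.dist_up_up, Real.dist_eq]
        exact le_trans (abs_dist_sub_le _ _ _) hd
      · intro C hC
        obtain ⟨r, hr⟩ := (Metric.isBounded_iff_subset_closedBall (ULift.up 0)).1 hC
        rw [Metric.isBounded_iff_subset_closedBall (⟨x₀, hx₀A⟩ : ↥A)]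
        refine ⟨r, ?_⟩
        intro a ha
        have := hr ha
        rw [Metric.mem_closedBall] at this ⊢
        simp only [hfdef, ULift.dist_up_up, Real.dist_eq, sub_zero] at this
        rw [Subtype.dist_eq]
        calc dist a.1 x₀ ≤ |dist a.1 x₀| := le_abs_self _
          _ ≤ r := this
    have hilip : ∀ (u v : X), Metric.infDist u (A ∩ B) ≤ Metric.infDist v (A ∩ B) + dist u v :=
      fun u v => Metric.infDist_le_infDist_add_dist
    have hgc : IsCoarse g := by
      constructor
      · intro R' hR'
        refine ⟨3 * R', by linarith, ?_⟩
        intro b b' hd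
        rw [Subtype.dist_eq] at hd
        simp only [hgdef, ULift.dist_up_up, Real.dist_eq]
        have h1 : |dist b.1 x₀ - dist b'.1 x₀| ≤ dist b.1 b'.1 := abs_dist_sub_le _ _ _
        have h2 := hilip b.1 b'.1
        have h3 := hilip b'.1 b.1
        rw [dist_comm b'.1 b.1] at h3
        rw [abs_le] at h1 ⊢
        constructor <;> linarith [h1.1, h1.2]
      · intro C hC
        obtain ⟨r, hr⟩ := (Metric.isBounded_iff_subset_closedBall (ULift.up 0)).1 hC
        rw [Metric.isBounded_iff_subset_closedBall (⟨x₀, hx₀B⟩ : ↥B)]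
        refine ⟨r, ?_⟩
        intro b hb
        have := hr hb
        rw [Metric.mem_closedBall] at this ⊢
        simp only [hgdef, ULift.dist_up_up, Real.dist_eq, sub_zero] at this
        rw [Subtype.dist_eq]
        have hnn : 0 ≤ Metric.infDist b.1 (A ∩ B) := Metric.infDist_nonneg
        have hd0 : 0 ≤ dist b.1 x₀ := dist_nonneg
        rw [abs_of_nonneg (by linarith)] at this
        linarith
    have hclose : ∃ R : ℝ, 0 < R ∧ ∀ (x : X) (hx : x ∈ A ∩ B),
        dist (f ⟨x, hx.1⟩) (g ⟨x, hx.2⟩) ≤ R := by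
      refine ⟨1, one_pos, ?_⟩
      intro x hx
      simp only [hfdef, hgdef, ULift.dist_up_up, Real.dist_eq,
        Metric.infDist_zero_of_mem hx]
      simp
    obtain ⟨⟨h, ⟨hborn, -⟩, ⟨RA, hRA, hclA⟩, ⟨RB, hRB, hclB⟩⟩, -⟩ :=
      H (ULift.{u} ℝ) f g hfc hgc hclose
    obtain ⟨S', hS', hS''⟩ := hborn (2 * R + 1) (by linarith)
    refine ⟨(S' + RA + RB + 2 * R) / 2 + R + 1, by linarith, ?_⟩
    rintro x ⟨a, haA, hxa⟩ ⟨b, hbB, hxb⟩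
    have hab : dist a b ≤ 2 * R + 1 := by
      have := dist_triangle a x b
      rw [dist_comm a x] at this
      linarith
    have h1 : dist (h a) (h b) ≤ S' := hS'' a b hab
    have h2 := hclA a haA
    have h3 := hclB b hbB
    simp only [hfdef, hgdef] at h2 h3
    rw [ULift.dist_eq, Real.dist_eq] at h1 h2 h3
    simp only [ULift.up_down] at h2 h3
    have h4 : |dist a x₀ - dist b x₀| ≤ dist a b := abs_dist_sub_le _ _ _
    rw [abs_le] at h1 h2 h3 h4
    have hab' : |dist a x₀ - dist b x₀| ≤ 2 * R + 1 := le_trans (abs_dist_sub_le _ _ _) hab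
    rw [abs_le] at hab'
    have hIb : 2 * Metric.infDist b (A ∩ B) ≤ RA + RB + S' + 2 * R + 1 := by
      linarith [h1.1, h1.2, h2.1, h2.2, h3.1, h3.2, hab'.1, hab'.2]
    have h5 : Metric.infDist x (A ∩ B) ≤ Metric.infDist b (A ∩ B) + dist x b :=
      Metric.infDist_le_infDist_add_dist
    have h6 : Metric.infDist x (A ∩ B) < (S' + RA + RB + 2 * R) / 2 + R + 1 := by
      linarith
    exact (Metric.infDist_lt_iff (⟨x₀, hx₀A, hx₀B⟩ : (A ∩ B).Nonempty)).1 h6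
end

section
/- A metric space X satisfies condition (C) if and only if in every ω-excisive decomposition X = A ∪ B of X into closed subsets with A ∩ B bounded, at least one of A and B is bounded. -/
open Bornology

lemma Bornologous.image_isBounded {X Y : Type*} [PseudoMetricSpace X] [PseudoMetricSpace Y]
    {f : X → Y} (hf : Bornologous f) {s : Set X} (hs : IsBounded s) : IsBounded (f '' s) := by
  rcases Metric.isBounded_iff.1 hs with ⟨C, hC⟩
  obtain ⟨S, _, hSf⟩ := hf (max C 1) (lt_of_lt_of_le one_pos (le_max_right _ _))
  refine Metric.isBounded_iff.2 ⟨S, ?_⟩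
  rintro _ ⟨a, ha, rfl⟩ _ ⟨b, hb, rfl⟩
  exact hSf a b ((hC ha hb).trans (le_max_left _ _))

/-- If the preimage of the left summand is bounded, a coarse map to a coarse coproduct
factors (up to closeness) through the right injection. -/
lemma factor_right {X Y Z : Type*} [MetricSpace X] [MetricSpace Y] [MetricSpace Z]
    (y₀ : Y) (z₀ : Z) (f : X → Y ⊕ Z) :
    letI := coprodMetric y₀ z₀
    IsCoarse f → IsBounded (f ⁻¹' (Set.range Sum.inl)) →
      ∃ h : X → Z, IsCoarse h ∧ Close (Sum.inr ∘ h) f := by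
  letI := coprodMetric y₀ z₀
  intro hf hbd
  refine ⟨fun x => Sum.elim (fun _ => z₀) id (f x), ⟨?_, ?_⟩, ?_⟩
  · -- bornologous
    intro R hR
    obtain ⟨S, hS, hfS⟩ := hf.1 R hR
    refine ⟨S, hS, fun x x' hxx' => ?_⟩
    have h1 := hfS x x' hxx'
    rcases hfx : f x with u | v <;> rcases hfx' : f x' with u' | v' <;>
      rw [hfx, hfx'] at h1 <;>
      simp only [hfx, hfx', Sum.elim_inl, Sum.elim_inr, id]
    · simpa using hS.le
    · have h2 : dist u y₀ + 1 + dist z₀ v' ≤ S := h1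
      have h3 := dist_nonneg (x := u) (y := y₀)
      linarith
    · have h2 : dist u' y₀ + 1 + dist z₀ v ≤ S := h1
      have h3 := dist_nonneg (x := u') (y := y₀)
      rw [dist_comm]; linarith
    · exact h1
  · -- proper
    intro W hW
    have hsub : (fun x => Sum.elim (fun _ => z₀) id (f x)) ⁻¹' W ⊆
        f ⁻¹' (Set.range Sum.inl) ∪ f ⁻¹' (Sum.inr '' W) := by
      intro x hx
      rcases hfx : f x with u | v
      · exact Or.inl ⟨u, hfx.symm⟩
      · refine Or.inr ?_
        have : Sum.elim (fun _ => z₀) id (f x) ∈ W := hx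
        rw [hfx] at this
        exact ⟨v, this, hfx.symm⟩
    refine ((hbd.union (hf.2 _ ?_)).subset hsub)
    rcases Metric.isBounded_iff.1 hW with ⟨C, hC⟩
    refine Metric.isBounded_iff.2 ⟨C, ?_⟩
    rintro _ ⟨a, ha, rfl⟩ _ ⟨b, hb, rfl⟩
    exact hC ha hb
  · -- close
    have himg := (hf.1).image_isBounded hbd
    obtain ⟨C, hC0, hCs⟩ := himg.subset_closedBall_lt 0 (Sum.inr z₀)
    refine ⟨C + 1, by linarith, fun x => ?_⟩
    rcases hfx : f x with u | v
    · have hx : x ∈ f ⁻¹' (Set.range Sum.inl) := ⟨u, hfx.symm⟩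
      have h1 : dist (f x) (Sum.inr z₀ : Y ⊕ Z) ≤ C :=
        hCs (Set.mem_image_of_mem f hx)
      rw [hfx] at h1
      have h2 : dist u y₀ + 1 + dist z₀ z₀ ≤ C := h1
      simp only [Function.comp_apply, hfx, Sum.elim_inl]
      show dist u y₀ + 1 + dist z₀ z₀ ≤ C + 1
      linarith
    · simp only [Function.comp_apply, hfx, Sum.elim_inr, id]
      show dist v v ≤ C + 1
      simp; linarith

/-- If the preimage of the right summand is bounded, a coarse map to a coarse coproduct
factors (up to closeness) through the left injection. -/
lemma factor_left {X Y Z : Type*} [MetricSpace X] [MetricSpace Y] [MetricSpace Z]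
    (y₀ : Y) (z₀ : Z) (f : X → Y ⊕ Z) :
    letI := coprodMetric y₀ z₀
    IsCoarse f → IsBounded (f ⁻¹' (Set.range Sum.inr)) →
      ∃ g : X → Y, IsCoarse g ∧ Close (Sum.inl ∘ g) f := by
  letI := coprodMetric y₀ z₀
  intro hf hbd
  refine ⟨fun x => Sum.elim id (fun _ => y₀) (f x), ⟨?_, ?_⟩, ?_⟩
  · -- bornologous
    intro R hR
    obtain ⟨S, hS, hfS⟩ := hf.1 R hR
    refine ⟨S, hS, fun x x' hxx' => ?_⟩
    have h1 := hfS x x' hxx'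
    rcases hfx : f x with u | v <;> rcases hfx' : f x' with u' | v' <;>
      rw [hfx, hfx'] at h1 <;>
      simp only [hfx, hfx', Sum.elim_inl, Sum.elim_inr, id]
    · exact h1
    · have h2 : dist u y₀ + 1 + dist z₀ v' ≤ S := h1
      have h3 := dist_nonneg (x := z₀) (y := v')
      linarith
    · have h2 : dist u' y₀ + 1 + dist z₀ v ≤ S := h1
      have h3 := dist_nonneg (x := z₀) (y := v)
      rw [dist_comm]; linarith
    · simpa using hS.le
  · -- proper
    intro W hW
    have hsub : (fun x => Sum.elim id (fun _ => y₀) (f x)) ⁻¹' W ⊆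
        f ⁻¹' (Set.range Sum.inr) ∪ f ⁻¹' (Sum.inl '' W) := by
      intro x hx
      rcases hfx : f x with u | v
      · refine Or.inr ?_
        have : Sum.elim id (fun _ => y₀) (f x) ∈ W := hx
        rw [hfx] at this
        exact ⟨u, this, hfx.symm⟩
      · exact Or.inl ⟨v, hfx.symm⟩
    refine ((hbd.union (hf.2 _ ?_)).subset hsub)
    rcases Metric.isBounded_iff.1 hW with ⟨C, hC⟩
    refine Metric.isBounded_iff.2 ⟨C, ?_⟩
    rintro _ ⟨a, ha, rfl⟩ _ ⟨b, hb, rfl⟩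
    exact hC ha hb
  · -- close
    have himg := (hf.1).image_isBounded hbd
    obtain ⟨C, hC0, hCs⟩ := himg.subset_closedBall_lt 0 (Sum.inl y₀)
    refine ⟨C + 1, by linarith, fun x => ?_⟩
    rcases hfx : f x with u | v
    · simp only [Function.comp_apply, hfx, Sum.elim_inl, id]
      show dist u u ≤ C + 1
      simp; linarith
    · have hx : x ∈ f ⁻¹' (Set.range Sum.inr) := ⟨v, hfx.symm⟩
      have h1 : dist (f x) (Sum.inl y₀ : Y ⊕ Z) ≤ C :=
        hCs (Set.mem_image_of_mem f hx)
      rw [hfx] at h1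
      have h2 : dist y₀ y₀ + 1 + dist z₀ v ≤ C := h1
      simp only [Function.comp_apply, hfx, Sum.elim_inr]
      show dist y₀ y₀ + 1 + dist z₀ v ≤ C + 1
      linarith

lemma converse_dir {X : Type u} [MetricSpace X]
    (H : ∀ A B : Set X, IsClosed A → IsClosed B → A ∪ B = Set.univ →
        OmegaExcisive A B → IsBounded (A ∩ B) → (IsBounded A ∨ IsBounded B)) :
    CondC X := by
  intro Y Z _ _ y₀ z₀ f hf
  letI := coprodMetric y₀ z₀
  set A₀ := f ⁻¹' (Set.range Sum.inl) with hA₀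
  set B₀ := f ⁻¹' (Set.range Sum.inr) with hB₀
  have key : IsBounded A₀ ∨ IsBounded B₀ := by
    rcases isEmpty_or_nonempty X with hX | ⟨⟨p⟩⟩
    · exact Or.inl (by rw [Set.eq_empty_of_isEmpty A₀]; exact Bornology.isBounded_empty)
    -- crossKey : points of A₀ at controlled distance from B₀ lie in a bounded set
    have crossKey : ∀ t : ℝ, 0 < t → ∃ K : Set X, IsBounded K ∧
        ∀ a b : X, a ∈ A₀ → b ∈ B₀ → dist a b ≤ t → a ∈ K := by
      intro t ht
      obtain ⟨S, hS, hfS⟩ := hf.1 t ht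
      refine ⟨f ⁻¹' Metric.closedBall (Sum.inl y₀) S, hf.2 _ Metric.isBounded_closedBall, ?_⟩
      rintro a b ⟨u, hu⟩ ⟨v, hv⟩ hab
      have h1 := hfS a b hab
      rw [← hu, ← hv] at h1
      have h2 : dist u y₀ + 1 + dist z₀ v ≤ S := h1
      have h3 := dist_nonneg (x := z₀) (y := v)
      show f a ∈ Metric.closedBall (Sum.inl y₀) S
      rw [Metric.mem_closedBall, ← hu]
      show dist u y₀ ≤ S
      linarith
    -- near : points close to both A₀ and B₀ lie in a bounded set
    have near : ∀ r : ℝ, 0 < r → ∃ K : Set X, IsBounded K ∧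
        ∀ x : X, (∃ a ∈ A₀, dist x a < r) → (∃ b ∈ B₀, dist x b < r) → x ∈ K := by
      intro r hr
      obtain ⟨K, hK, hKmem⟩ := crossKey (2 * r) (by linarith)
      obtain ⟨ρ, hρ0, hρ⟩ := hK.subset_closedBall_lt 0 p
      refine ⟨Metric.closedBall p (ρ + r), Metric.isBounded_closedBall, ?_⟩
      rintro x ⟨a, haA, hxa⟩ ⟨b, hbB, hxb⟩
      have hab : dist a b ≤ 2 * r := by
        have := dist_triangle a x b
        rw [dist_comm a x] at this
        linarith
      have haK : a ∈ K := hKmem a b haA hbB hab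
      have := hρ haK
      rw [Metric.mem_closedBall] at this ⊢
      have := dist_triangle x a p
      linarith
    set A : Set X := closure A₀ ∪ {p} with hA
    set B : Set X := closure B₀ ∪ {p} with hB
    have hpA : p ∈ A := Set.mem_union_right _ rfl
    have hpB : p ∈ B := Set.mem_union_right _ rfl
    have hres := H A B (isClosed_closure.union isClosed_singleton)
      (isClosed_closure.union isClosed_singleton)
      (by
        rw [Set.eq_univ_iff_forall]
        intro x
        rcases hfx : f x with u | v
        · exact Or.inl (Set.mem_union_left _ (subset_closure ⟨u, hfx.symm⟩))
        · exact Or.inr (Set.mem_union_left _ (subset_closure ⟨v, hfx.symm⟩)))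
      (by
        intro R hR
        obtain ⟨K, hK, hKmem⟩ := near (2 * R) (by linarith)
        obtain ⟨ρ, hρ0, hρ⟩ := hK.subset_closedBall_lt 0 p
        refine ⟨max R ρ + 1, by positivity, ?_⟩
        rintro x ⟨a, haA, hxa⟩ ⟨b, hbB, hxb⟩
        refine ⟨p, ⟨hpA, hpB⟩, ?_⟩
        rcases haA with haA | hap
        · rcases hbB with hbB | hbp
          · obtain ⟨a', ha'A, haa'⟩ := Metric.mem_closure_iff.1 haA R hR
            obtain ⟨b', hb'B, hbb'⟩ := Metric.mem_closure_iff.1 hbB R hR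
            have hxK : x ∈ K := hKmem x
              ⟨a', ha'A, by have := dist_triangle x a a'; linarith⟩
              ⟨b', hb'B, by have := dist_triangle x b b'; linarith⟩
            have := hρ hxK
            rw [Metric.mem_closedBall] at this
            calc dist x p ≤ ρ := this
              _ ≤ max R ρ := le_max_right _ _
              _ < max R ρ + 1 := by linarith
          · rw [Set.mem_singleton_iff] at hbp
            rw [hbp] at hxb
            calc dist x p < R := hxb
              _ ≤ max R ρ + 1 := by have := le_max_left R ρ; linarith
        · rw [Set.mem_singleton_iff] at hap
          rw [hap] at hxa
          calc dist x p < R := hxa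
            _ ≤ max R ρ + 1 := by have := le_max_left R ρ; linarith)
      (by
        obtain ⟨K, hK, hKmem⟩ := near 1 one_pos
        refine IsBounded.subset (t := K ∪ {p}) (hK.union Bornology.isBounded_singleton) ?_
        rintro x ⟨hxA, hxB⟩
        rcases hxA with hxA | hxp
        · rcases hxB with hxB | hxp
          · refine Or.inl (hKmem x ?_ ?_)
            · obtain ⟨a, haA, hxa⟩ := Metric.mem_closure_iff.1 hxA 1 one_pos
              exact ⟨a, haA, hxa⟩
            · obtain ⟨b, hbB, hxb⟩ := Metric.mem_closure_iff.1 hxB 1 one_pos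
              exact ⟨b, hbB, hxb⟩
          · exact Or.inr hxp
        · exact Or.inr hxp)
    refine hres.imp (fun h => h.subset ?_) (fun h => h.subset ?_)
    · exact subset_closure.trans (Set.subset_union_left)
    · exact subset_closure.trans (Set.subset_union_left)
  rcases key with hA₀ | hB₀
  · exact Or.inr (factor_right y₀ z₀ f hf hA₀)
  · exact Or.inl (factor_left y₀ z₀ f hf hB₀)

lemma forward_dir {X : Type u} [MetricSpace X] (hC : CondC X)
    (A B : Set X) (hAc : IsClosed A) (hBc : IsClosed B) (hAB : A ∪ B = Set.univ)
    (hexc : OmegaExcisive A B) (hbd : IsBounded (A ∩ B)) :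
    IsBounded A ∨ IsBounded B := by
  classical
  rcases A.eq_empty_or_nonempty with rfl | ⟨a₀, ha₀⟩
  · exact Or.inl Bornology.isBounded_empty
  rcases B.eq_empty_or_nonempty with rfl | ⟨b₀, hb₀⟩
  · exact Or.inr Bornology.isBounded_empty
  have hmem : ∀ x : X, x ∉ A → x ∈ B := by
    intro x hx
    have hx2 : x ∈ A ∪ B := hAB.symm ▸ Set.mem_univ x
    rcases hx2 with h | h
    · exact absurd h hx
    · exact h
  obtain ⟨ra, hra0, hra⟩ := hbd.subset_closedBall_lt 0 a₀
  obtain ⟨rb, hrb0, hrb⟩ := hbd.subset_closedBall_lt 0 b₀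
  letI inst := coprodMetric (⟨a₀, ha₀⟩ : ↥A) (⟨b₀, hb₀⟩ : ↥B)
  set f : X → ↥A ⊕ ↥B :=
    fun x => if h : x ∈ A then Sum.inl ⟨x, h⟩ else Sum.inr ⟨x, hmem x h⟩ with hfdef
  have hfl : ∀ (x : X) (h : x ∈ A), f x = Sum.inl ⟨x, h⟩ := fun x h => dif_pos h
  have hfr : ∀ (x : X) (h : x ∉ A), f x = Sum.inr ⟨x, hmem x h⟩ := fun x h => dif_neg h
  have hborn : Bornologous f := by
    intro R hR
    obtain ⟨S, hSpos, hS⟩ := hexc (R + 1) (by linarith)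
    refine ⟨R + S + ra + rb + S + R + 1, by linarith, ?_⟩
    intro x x' hxx'
    by_cases hx : x ∈ A <;> by_cases hx' : x' ∈ A
    · rw [hfl x hx, hfl x' hx']
      show dist x x' ≤ R + S + ra + rb + S + R + 1
      linarith
    · rw [hfl x hx, hfr x' hx']
      show dist x a₀ + 1 + dist b₀ x' ≤ R + S + ra + rb + S + R + 1
      obtain ⟨c, ⟨hcA, hcB⟩, hxc⟩ := hS x ⟨x, hx, by rw [dist_self]; linarith⟩
        ⟨x', hmem x' hx', by linarith⟩
      have h1 : dist c a₀ ≤ ra := hra ⟨hcA, hcB⟩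
      have h2 : dist c b₀ ≤ rb := hrb ⟨hcA, hcB⟩
      have t1 := dist_triangle x c a₀
      have t2 := dist_triangle b₀ c x
      have t3 := dist_triangle b₀ x x'
      have e1 : dist b₀ c = dist c b₀ := dist_comm _ _
      have e2 : dist c x = dist x c := dist_comm _ _
      linarith
    · rw [hfr x hx, hfl x' hx']
      show dist x' a₀ + 1 + dist b₀ x ≤ R + S + ra + rb + S + R + 1
      obtain ⟨c, ⟨hcA, hcB⟩, hxc⟩ := hS x' ⟨x', hx', by rw [dist_self]; linarith⟩
        ⟨x, hmem x hx, by rw [dist_comm]; linarith⟩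
      have h1 : dist c a₀ ≤ ra := hra ⟨hcA, hcB⟩
      have h2 : dist c b₀ ≤ rb := hrb ⟨hcA, hcB⟩
      have t1 := dist_triangle x' c a₀
      have t2 := dist_triangle b₀ c x'
      have t3 := dist_triangle b₀ x' x
      have e1 : dist b₀ c = dist c b₀ := dist_comm _ _
      have e2 : dist c x' = dist x' c := dist_comm _ _
      have e3 : dist x' x = dist x x' := dist_comm _ _
      linarith
    · rw [hfr x hx, hfr x' hx']
      show dist x x' ≤ R + S + ra + rb + S + R + 1
      linarith
  have hprop : ProperMap f := by
    intro W hW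
    rcases W.eq_empty_or_nonempty with rfl | ⟨w₀, hw₀⟩
    · rw [Set.preimage_empty]; exact Bornology.isBounded_empty
    rcases Metric.isBounded_iff.1 hW with ⟨C, hCW⟩
    refine (Metric.isBounded_closedBall
      (x := a₀) (r := C + dist w₀ (Sum.inl (⟨a₀, ha₀⟩ : ↥A)) + dist b₀ a₀ + 1)).subset ?_
    intro x hx
    have h1 : dist (f x) w₀ ≤ C := hCW hx hw₀
    have h2 : dist (f x) (Sum.inl (⟨a₀, ha₀⟩ : ↥A)) ≤ C + dist w₀ (Sum.inl (⟨a₀, ha₀⟩ : ↥A)) := by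
      have := dist_triangle (f x) w₀ (Sum.inl (⟨a₀, ha₀⟩ : ↥A))
      linarith
    rw [Metric.mem_closedBall]
    by_cases hxA : x ∈ A
    · rw [hfl x hxA] at h2
      have h3 : dist x a₀ ≤ C + dist w₀ (Sum.inl (⟨a₀, ha₀⟩ : ↥A)) := h2
      have := dist_nonneg (x := b₀) (y := a₀)
      linarith
    · rw [hfr x hxA] at h2
      have h3 : dist a₀ a₀ + 1 + dist b₀ x ≤ C + dist w₀ (Sum.inl (⟨a₀, ha₀⟩ : ↥A)) := h2
      have t1 := dist_triangle x b₀ a₀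
      have e1 : dist x b₀ = dist b₀ x := dist_comm _ _
      rw [dist_self] at h3
      linarith
  rcases hC ↥A ↥B ⟨a₀, ha₀⟩ ⟨b₀, hb₀⟩ f ⟨hborn, hprop⟩ with
    ⟨g, _, R, hRpos, hclose⟩ | ⟨h, _, R, hRpos, hclose⟩
  · refine Or.inr ?_
    refine (hbd.union (Metric.isBounded_closedBall (x := b₀) (r := R))).subset ?_
    intro x hxB
    by_cases hxA : x ∈ A
    · exact Or.inl ⟨hxA, hxB⟩
    · refine Or.inr ?_
      have h1 := hclose x
      rw [Function.comp_apply, hfr x hxA] at h1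
      have h2 : dist ((g x : X)) a₀ + 1 + dist b₀ x ≤ R := h1
      rw [Metric.mem_closedBall, dist_comm]
      have := dist_nonneg (x := (g x : X)) (y := a₀)
      linarith
  · refine Or.inl ?_
    refine (Metric.isBounded_closedBall (x := a₀) (r := R)).subset ?_
    intro x hxA
    have h1 := hclose x
    rw [Function.comp_apply, hfl x hxA] at h1
    have h2 : dist x a₀ + 1 + dist b₀ ((h x : X)) ≤ R := h1
    rw [Metric.mem_closedBall]
    have := dist_nonneg (x := b₀) (y := (h x : X))
    linarith

/-- `X` satisfies condition (C) iff in every ω-excisive decomposition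
`X = A ∪ B` into closed subsets with `A ∩ B` bounded, one of `A` and `B` is bounded. -/
theorem condC_iff_omegaExcisive_decompositions_trivial {X : Type u} [MetricSpace X] :
    CondC X ↔
      ∀ A B : Set X, IsClosed A → IsClosed B → A ∪ B = Set.univ →
        OmegaExcisive A B → IsBounded (A ∩ B) → (IsBounded A ∨ IsBounded B) := by
  exact ⟨fun hC A B hAc hBc hAB hexc hbd => forward_dir hC A B hAc hBc hAB hexc hbd,
    converse_dir⟩
end
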